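/- arXiv:2410.06095 — 7 statements merged into one kernel-verified Lean document; each statement's English description precedes it below -/
import Mathlib

section
/- Let G be a finite graph and let u, v be distinct vertices of G. If there exist a positive integer i and an integer d such that the number of elements of the multiset L^i_G(u,v) (counted with multiplicity) whose degree in G equals d is not equal to the corresponding number for L^i_G(v,u), then u and v receive distinct colours in the stable colouring R*σ produced by colour refinement. -/
open MeasureTheory Filter

/-- Product of (independent) Bernoulli distributions on `ι → Bool`, with
success probability `q i` in coordinate `i`. -/
noncomputable def bernoulliProduct (ι : Type*) [Fintype ι] [DecidableEq ι] (q : ι → ℝ) :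
    Measure (ι → Bool) :=
  ∑ f : ι → Bool,
    (∏ i : ι, if f i then ENNReal.ofReal (q i) else ENNReal.ofReal (1 - q i)) •
      Measure.dirac f

/-- The Erdős–Rényi measure: each (potential) edge of the complete graph on `Fin n`
is present independently with probability `p`; encoded as a random `Sym2 (Fin n) → Bool`. -/
noncomputable def erdosRenyiMeasure (n : ℕ) (p : ℝ) : Measure (Sym2 (Fin n) → Bool) :=
  bernoulliProduct (Sym2 (Fin n)) fun _ => p

/-- The graph on `Fin n` determined by an edge-indicator function. -/
def graphOfFlip {n : ℕ} (f : Sym2 (Fin n) → Bool) : SimpleGraph (Fin n) :=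
  SimpleGraph.fromRel fun u v => f s(u, v) = true

/-- Symmetric difference of two graphs on the same vertex set. -/
def symmDiffG {V : Type*} (G₁ G₂ : SimpleGraph V) : SimpleGraph V :=
  SimpleGraph.fromRel fun u v => Xor' (G₁.Adj u v) (G₂.Adj u v)

/-- `crEquiv G c t u v` : vertices `u` and `v` get the same colour after `t` rounds of
colour refinement on `G`, starting from the colouring `c`. -/
def crEquiv {V : Type*} {Ω : Type*} (G : SimpleGraph V) (c : V → Ω) : ℕ → V → V → Prop
  | 0, u, v => c u = c v
  | (t + 1), u, v => crEquiv G c t u v ∧ ∀ w : V,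
      Nat.card {x : V // G.Adj u x ∧ crEquiv G c t x w} =
      Nat.card {x : V // G.Adj v x ∧ crEquiv G c t x w}

/-- `u` and `v` get the same colour in the stable colouring `R* c`. -/
def crStable {V : Type*} {Ω : Type*} (G : SimpleGraph V) (c : V → Ω) (u v : V) : Prop :=
  ∀ t, crEquiv G c t u v

/-- `u` and `v` get the same colour in the stable colouring `R* σ`
(colour refinement started from the trivial colouring). -/
def crStableTrivial {V : Type*} (G : SimpleGraph V) (u v : V) : Prop :=
  crStable G (fun _ => (0 : ℕ)) u v

/-- Equality of the initial pair-colourings `φ_{G,c}` on two ordered pairs of vertices. -/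
def wl2Init {V : Type*} {Ω : Type*} (G : SimpleGraph V) (c : V → Ω) (p q : V × V) : Prop :=
  (G.Adj p.1 p.2 ↔ G.Adj q.1 q.2) ∧ (p.1 = p.2 ↔ q.1 = q.2) ∧
    (p.1 = p.2 → q.1 = q.2 → c p.2 = c q.2)

/-- `wl2Equiv G c t p q` : the ordered pairs `p` and `q` get the same colour after `t` rounds of
the 2-dimensional Weisfeiler–Leman refinement on `G`, started from `φ_{G,c}`. -/
def wl2Equiv {V : Type*} {Ω : Type*} (G : SimpleGraph V) (c : V → Ω) :
    ℕ → V × V → V × V → Prop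
  | 0, p, q => wl2Init G c p q
  | (t + 1), p, q => wl2Equiv G c t p q ∧ ∀ r s : V × V,
      Nat.card {w : V // wl2Equiv G c t (p.1, w) r ∧ wl2Equiv G c t (w, p.2) s} =
      Nat.card {w : V // wl2Equiv G c t (q.1, w) r ∧ wl2Equiv G c t (w, q.2) s}

/-- `u` and `v` get the same colour in the vertex colouring `V* c` obtained from the stable
pair colouring of the 2-dimensional Weisfeiler–Leman algorithm started from `φ_{G,c}`. -/
def wl2VertexEquiv {V : Type*} {Ω : Type*} (G : SimpleGraph V) (c : V → Ω) (u v : V) : Prop :=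
  ∀ t, wl2Equiv G c t (u, u) (v, v)

/-- Given a colouring of `V(H)` encoded as the equivalence relation `r` ("has the same colour"),
`majority H r u v` says that at least half of the possible edges between the colour class of `u`
and the colour class of `v` are present in `H` (counting ordered pairs). -/
def majority {V : Type*} (H : SimpleGraph V) (r : V → V → Prop) (u v : V) : Prop :=
  Nat.card {p : V × V // p.1 ≠ p.2 ∧ r p.1 u ∧ r p.2 v} ≤
    2 * Nat.card {p : V × V // p.1 ≠ p.2 ∧ r p.1 u ∧ r p.2 v ∧ H.Adj p.1 p.2}

/-- The disparity graph `D(H,c)`, for the colouring encoded by the relation `r`. -/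
def disparity {V : Type*} (H : SimpleGraph V) (r : V → V → Prop) : SimpleGraph V :=
  SimpleGraph.fromRel fun u v => Xor' (H.Adj u v) (majority H r u v)

/-- The generalised disparity graph `D_L(H,c)` for a 0-1 matrix `L` on colours. -/
def gDisparity {V : Type*} {Ω : Type*} (H : SimpleGraph V) (c : V → Ω) (L : Ω → Ω → Bool) :
    SimpleGraph V :=
  SimpleGraph.fromRel fun u v => Xor' (H.Adj u v) (L (c u) (c v) = true)

/-- The vertex set of the connected component of `v` in `G`. -/
def compSet {V : Type*} (G : SimpleGraph V) (v : V) : Set V := {u | G.Reachable v u}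

/-- A colouring is equitable if any two vertices with the same colour have the same number of
neighbours in every colour class. -/
def IsEquitable {V : Type*} {Ω : Type*} (H : SimpleGraph V) (c : V → Ω) : Prop :=
  ∀ u v, c u = c v → ∀ a : Ω,
    Nat.card {x : V // H.Adj u x ∧ c x = a} = Nat.card {x : V // H.Adj v x ∧ c x = a}

/-- Vertex set of the `k`-core of `G`: the union of all vertex sets inducing minimum
degree at least `k`. -/
def kCore {V : Type*} (G : SimpleGraph V) (k : ℕ) : Set V :=
  ⋃₀ {S : Set V | ∀ v ∈ S, k ≤ Nat.card {u : V // u ∈ S ∧ G.Adj v u}}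

/-- `V_{2,3}(G)`: vertices of the 2-core of `G` having degree at least 3 in the 2-core. -/
def V23 {V : Type*} (G : SimpleGraph V) : Set V :=
  {v | v ∈ kCore G 2 ∧ 3 ≤ Nat.card {u : V // u ∈ kCore G 2 ∧ G.Adj v u}}

/-- The graph obtained from `G` by deleting all edges meeting `T`
(so that reachability in `avoidG G T` from `v ∉ T` is reachability in `G - T`). -/
def avoidG {V : Type*} (G : SimpleGraph V) (T : Set V) : SimpleGraph V :=
  SimpleGraph.fromRel fun u v => G.Adj u v ∧ u ∉ T ∧ v ∉ T

/-- `V_{2,3}^{safe}(G)`: vertices `v ∈ V_{2,3}(G)` such that after deleting any set of at most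
two other vertices, the component of `v` still contains at least 3 vertices of `V_{2,3}(G)`. -/
def V23safe {V : Type*} (G : SimpleGraph V) : Set V :=
  {v | v ∈ V23 G ∧ ∀ T : Finset V, T.card ≤ 2 → v ∉ T →
    3 ≤ Nat.card {w : V // w ∈ V23 G ∧ (avoidG G (T : Set V)).Reachable v w}}

open Classical in
/-- `Lmul G i u v w` is the multiplicity of the vertex `w` in the multiset `L^i_G(u,v)`. -/
noncomputable def Lmul {V : Type*} [Fintype V] (G : SimpleGraph V) : ℕ → V → V → V → ℕ
  | 0, u, _, w => if w = u then 1 else 0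
  | (i + 1), u, v, w =>
      (∑ x : V, if G.Adj w x then Lmul G i u v x else 0) -
        (∑ x : V, if G.Adj w x then Lmul G i v u x else 0)

/-- Union over `j < i` of the supports of `L^j_G(u,v)` and `L^j_G(v,u)`. -/
noncomputable def Sbelow {V : Type*} [Fintype V] (G : SimpleGraph V) (u v : V) (i : ℕ) :
    Set V :=
  {w | ∃ j < i, 0 < Lmul G j u v w ∨ 0 < Lmul G j v u w}

/-- `S^{≤ i}_G({u,v})`. -/
noncomputable def Sle {V : Type*} [Fintype V] (G : SimpleGraph V) (u v : V) (i : ℕ) : Set V :=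
  Sbelow G u v (i + 1)

/-- `S^{i}_G({u,v}) = S^{≤ i}_G({u,v}) \ S^{≤ i-1}_G({u,v})`. -/
noncomputable def Sat {V : Type*} [Fintype V] (G : SimpleGraph V) (u v : V) (i : ℕ) : Set V :=
  Sbelow G u v (i + 1) \ Sbelow G u v i

/-- Degree of a vertex (as `Nat.card` of the neighbour set, avoiding decidability issues). -/
noncomputable def ncDegree {V : Type*} (G : SimpleGraph V) (v : V) : ℕ :=
  Nat.card {u : V // G.Adj v u}

/-- The random refinement of a colouring `c`: each vertex `v` with `f v = true` receives
a brand-new colour unique to itself. -/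
def refineColor {V : Type*} {Ω : Type*} (c : V → Ω) (f : V → Bool) : V → Ω ⊕ V :=
  fun v => if f v then Sum.inr v else Sum.inl (c v)

/-- `D(H,c)` (for the colouring encoded by the relation `r`) is `s`-bounded: every
intersection of a colour class with a connected component of `D(H,c)` has at most
`s` elements. -/
def sBounded {V : Type*} (H : SimpleGraph V) (r : V → V → Prop) (s : ℕ) : Prop :=
  ∀ u v : V, Nat.card {w : V // r w u ∧ w ∈ compSet (disparity H r) v} ≤ s

/-- The type of canonical colours after `t` rounds of colour refinement. -/
def CCol : ℕ → Type
  | 0 => Unit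
  | (t + 1) => CCol t × Multiset (CCol t)

open Classical in
/-- The canonical colour of a vertex after `t` rounds of colour refinement. -/
noncomputable def canonColor {V : Type*} [Fintype V] (G : SimpleGraph V) :
    (t : ℕ) → V → CCol t
  | 0, _ => ()
  | (t + 1), v =>
      (canonColor G t v, (Finset.univ.filter fun w => G.Adj v w).val.map (canonColor G t))

/-- The modal probability `M(m,p)` of a `Binomial(m,p)` random variable. -/
noncomputable def modalProb (m : ℕ) (p : ℝ) : ℝ :=
  (m.choose ⌊(m + 1 : ℝ) * p⌋₊ : ℝ) * p ^ ⌊(m + 1 : ℝ) * p⌋₊ *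
    (1 - p) ^ (m - ⌊(m + 1 : ℝ) * p⌋₊)


section Stmt8Aux

variable {V : Type*} {Ω : Type*}

lemma crEquiv_refl' (G : SimpleGraph V) (c : V → Ω) :
    ∀ t (x : V), crEquiv G c t x x
  | 0, _ => rfl
  | (t + 1), x => ⟨crEquiv_refl' G c t x, fun _ => rfl⟩

lemma crEquiv_symm' (G : SimpleGraph V) (c : V → Ω) :
    ∀ t (x y : V), crEquiv G c t x y → crEquiv G c t y x
  | 0, x, y, h => (show c x = c y from h).symm
  | (t + 1), x, y, h => ⟨crEquiv_symm' G c t x y h.1, fun w => (h.2 w).symm⟩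

lemma crEquiv_trans' (G : SimpleGraph V) (c : V → Ω) :
    ∀ t (x y z : V), crEquiv G c t x y → crEquiv G c t y z → crEquiv G c t x z
  | 0, x, y, z, h1, h2 => (show c x = c y from h1).trans h2
  | (t + 1), x, y, z, h1, h2 =>
      ⟨crEquiv_trans' G c t x y z h1.1 h2.1, fun w => (h1.2 w).trans (h2.2 w)⟩

end Stmt8Aux

section Stmt8Aux2

open Classical

variable {V : Type*} [Fintype V]

lemma Lmul_zero (G : SimpleGraph V) (u v w : V) :
    Lmul G 0 u v w = if w = u then 1 else 0 := by
  simp [Lmul]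

lemma Dsucc (G : SimpleGraph V) (u v : V) (i : ℕ) (w : V) :
    (Lmul G (i + 1) u v w : ℤ) - (Lmul G (i + 1) v u w : ℤ) =
      ∑ x : V, if G.Adj w x then (Lmul G i u v x : ℤ) - (Lmul G i v u x : ℤ) else 0 := by
  classical
  have hsplit : (∑ x : V, if G.Adj w x then (Lmul G i u v x : ℤ) - (Lmul G i v u x : ℤ) else 0)
      = (∑ x : V, if G.Adj w x then (Lmul G i u v x : ℤ) else 0)
        - (∑ x : V, if G.Adj w x then (Lmul G i v u x : ℤ) else 0) := by
    rw [← Finset.sum_sub_distrib]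
    refine Finset.sum_congr rfl fun x _ => ?_
    split <;> simp
  rw [hsplit]
  have h1 : (∑ x : V, if G.Adj w x then (Lmul G i u v x : ℤ) else 0)
      = ((∑ x : V, if G.Adj w x then Lmul G i u v x else 0 : ℕ) : ℤ) := by
    push_cast; rfl
  have h2 : (∑ x : V, if G.Adj w x then (Lmul G i v u x : ℤ) else 0)
      = ((∑ x : V, if G.Adj w x then Lmul G i v u x else 0 : ℕ) : ℤ) := by
    push_cast; rfl
  rw [h1, h2]
  show ((Lmul G (i+1) u v w : ℤ)) - _ = _
  simp only [Lmul]
  generalize (∑ x : V, if G.Adj w x then Lmul G i u v x else 0) = A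
  generalize (∑ x : V, if G.Adj w x then Lmul G i v u x else 0) = B
  omega

end Stmt8Aux2

section Stmt8Main

open Classical

variable {V : Type*} [Fintype V]

/-- The setoid of `crEquiv` at time `t` (trivial initial colouring). -/
def crSetoid (G : SimpleGraph V) (t : ℕ) : Setoid V :=
  ⟨crEquiv G (fun _ => (0 : ℕ)) t,
    ⟨crEquiv_refl' G _ t, fun h => crEquiv_symm' G _ t _ _ h,
      fun h1 h2 => crEquiv_trans' G _ t _ _ _ h1 h2⟩⟩

noncomputable local instance quotFintype (s : Setoid V) : Fintype (Quotient s) :=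
  @Quotient.fintype _ _ s fun _ _ => Classical.propDecidable _

lemma ncard_eq_sum (P : V → Prop) :
    (Nat.card {x : V // P x} : ℤ) = ∑ x : V, if P x then (1 : ℤ) else 0 := by
  rw [Nat.card_eq_fintype_card, Fintype.card_subtype, Finset.card_filter]
  push_cast
  simp [apply_ite (Nat.cast : ℕ → ℤ)]

lemma stmt8_group (G : SimpleGraph V) (t : ℕ) (F : V → ℤ)
    (hF : ∀ x y, crEquiv G (fun _ => (0 : ℕ)) t x y → F x = F y) (y : V) :
    (∑ x : V, if G.Adj y x then F x else 0) =
      ∑ q : Quotient (crSetoid G t), F q.out *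
        (Nat.card {x : V // G.Adj y x ∧ crEquiv G (fun _ => (0 : ℕ)) t x q.out} : ℤ) := by
  have step1 : ∀ q : Quotient (crSetoid G t),
      F q.out * (Nat.card {x : V // G.Adj y x ∧ crEquiv G (fun _ => (0 : ℕ)) t x q.out} : ℤ)
        = ∑ x : V, if G.Adj y x ∧ crEquiv G (fun _ => (0 : ℕ)) t x q.out then F x else 0 := by
    intro q
    rw [ncard_eq_sum, Finset.mul_sum]
    refine Finset.sum_congr rfl fun x _ => ?_
    by_cases hx : G.Adj y x ∧ crEquiv G (fun _ => (0 : ℕ)) t x q.out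
    · rw [if_pos hx, if_pos hx, mul_one, hF x q.out hx.2]
    · rw [if_neg hx, if_neg hx, mul_zero]
  rw [Finset.sum_congr rfl fun q _ => step1 q, Finset.sum_comm]
  refine Finset.sum_congr rfl fun x _ => ?_
  have key : ∀ q : Quotient (crSetoid G t),
      (if G.Adj y x ∧ crEquiv G (fun _ => (0 : ℕ)) t x q.out then F x else 0)
        = if q = Quotient.mk (crSetoid G t) x then (if G.Adj y x then F x else 0) else 0 := by
    intro q
    have hiff : crEquiv G (fun _ => (0 : ℕ)) t x q.out ↔ q = Quotient.mk (crSetoid G t) x := by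
      constructor
      · intro h
        have := Quotient.sound (s := crSetoid G t) (a := x) (b := q.out) h
        rw [Quotient.out_eq] at this
        exact this.symm
      · intro h
        subst h
        exact crEquiv_symm' G _ t _ _ (Quotient.mk_out (s := crSetoid G t) x)
    by_cases hq : q = Quotient.mk (crSetoid G t) x
    · rw [if_pos hq]
      by_cases ha : G.Adj y x
      · rw [if_pos ⟨ha, hiff.mpr hq⟩, if_pos ha]
      · rw [if_neg (fun hc => ha hc.1), if_neg ha]
    · rw [if_neg (fun hc => hq (hiff.mp hc.2)), if_neg hq]
  rw [Finset.sum_congr rfl fun q _ => key q, Finset.sum_ite_eq']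
  simp

end Stmt8Main

section Stmt8Final

open Classical

variable {V : Type*} [Fintype V]

noncomputable local instance quotFintype' (s : Setoid V) : Fintype (Quotient s) :=
  @Quotient.fintype _ _ s fun _ _ => Classical.propDecidable _

lemma stmt8_main (G : SimpleGraph V) (u v : V) (hst : crStableTrivial G u v) :
    ∀ (i t : ℕ) (F : V → ℤ),
      (∀ x y, crEquiv G (fun _ => (0 : ℕ)) t x y → F x = F y) →
      ∑ x : V, F x * ((Lmul G i u v x : ℤ) - (Lmul G i v u x : ℤ)) = 0 := by
  intro i
  induction i with
  | zero =>
    intro t F hF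
    have hm : F u = F v := hF u v (hst t)
    simp only [Lmul_zero]
    push_cast
    simp [mul_sub, Finset.sum_sub_distrib, mul_ite, mul_one, mul_zero,
      Finset.sum_ite_eq', hm]
  | succ i ih =>
    intro t F hF
    have hD : ∀ x : V, F x * ((Lmul G (i + 1) u v x : ℤ) - (Lmul G (i + 1) v u x : ℤ))
        = F x * ∑ y : V, if G.Adj x y then (Lmul G i u v y : ℤ) - (Lmul G i v u y : ℤ) else 0 :=
      fun x => by rw [Dsucc]
    rw [Finset.sum_congr rfl fun x _ => hD x]
    have swap : (∑ x : V, F x *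
          ∑ y : V, if G.Adj x y then (Lmul G i u v y : ℤ) - (Lmul G i v u y : ℤ) else 0)
        = ∑ y : V, (∑ x : V, if G.Adj y x then F x else 0) *
            ((Lmul G i u v y : ℤ) - (Lmul G i v u y : ℤ)) := by
      simp only [Finset.mul_sum, Finset.sum_mul]
      rw [Finset.sum_comm]
      refine Finset.sum_congr rfl fun y _ => Finset.sum_congr rfl fun x _ => ?_
      by_cases ha : G.Adj x y
      · rw [if_pos ha, if_pos (G.adj_symm ha)]
      · rw [if_neg ha, if_neg (fun hc => ha (G.adj_symm hc)), mul_zero, zero_mul]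
    rw [swap]
    refine ih (t + 1) (fun y => ∑ x : V, if G.Adj y x then F x else 0) ?_
    intro y z hyz
    show (∑ x : V, if G.Adj y x then F x else 0) = (∑ x : V, if G.Adj z x then F x else 0)
    rw [stmt8_group G t F hF y, stmt8_group G t F hF z]
    exact Finset.sum_congr rfl fun q _ => by rw [hyz.2 q.out]

lemma deg_inv (G : SimpleGraph V) (x y : V)
    (h : crEquiv G (fun _ => (0 : ℕ)) 1 x y) : ncDegree G x = ncDegree G y := by
  have h2 := h.2 x
  have e1 : Nat.card {a : V // G.Adj x a ∧ crEquiv G (fun _ => (0 : ℕ)) 0 a x}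
      = ncDegree G x := Nat.card_congr (Equiv.subtypeEquivRight fun a =>
        and_iff_left (show (0 : ℕ) = 0 from rfl))
  have e2 : Nat.card {a : V // G.Adj y a ∧ crEquiv G (fun _ => (0 : ℕ)) 0 a x}
      = ncDegree G y := Nat.card_congr (Equiv.subtypeEquivRight fun a =>
        and_iff_left (show (0 : ℕ) = 0 from rfl))
  rw [← e1, ← e2, h2]

theorem stmt8_aux {V : Type*} [Fintype V] (G : SimpleGraph V) (u v : V) (huv : u ≠ v)
    (h : ∃ i : ℕ, 0 < i ∧ ∃ d : ℕ,
      (∑ w : V, if ncDegree G w = d then Lmul G i u v w else 0) ≠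
        (∑ w : V, if ncDegree G w = d then Lmul G i v u w else 0)) :
    ¬ crStableTrivial G u v := by
  classical
  intro hst
  obtain ⟨i, _, d, hd⟩ := h
  have hmain := stmt8_main G u v hst i 1
    (fun x => if ncDegree G x = d then (1 : ℤ) else 0)
    (fun x y hxy => by simp only [deg_inv G x y hxy])
  apply hd
  have hsplit : (∑ x : V, (if ncDegree G x = d then (1 : ℤ) else 0) *
        ((Lmul G i u v x : ℤ) - (Lmul G i v u x : ℤ)))
      = ((∑ w : V, if ncDegree G w = d then Lmul G i u v w else 0 : ℕ) : ℤ)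
        - ((∑ w : V, if ncDegree G w = d then Lmul G i v u w else 0 : ℕ) : ℤ) := by
    push_cast
    rw [← Finset.sum_sub_distrib]
    refine Finset.sum_congr rfl fun x _ => ?_
    by_cases hx : ncDegree G x = d
    · simp [hx]
    · simp [hx]
  rw [hsplit] at hmain
  exact_mod_cast sub_eq_zero.mp hmain

end Stmt8Final

/-- Lemma 3.4.
If for some `i ≥ 1` and degree `d`, the multisets `L^i_G(u,v)` and `L^i_G(v,u)` contain
different numbers of vertices of degree `d` (with multiplicity), then `u` and `v` receive
distinct colours in the stable colouring `R*σ`. -/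
theorem stmt8 {V : Type*} [Fintype V] (G : SimpleGraph V) (u v : V) (huv : u ≠ v)
    (h : ∃ i : ℕ, 0 < i ∧ ∃ d : ℕ,
      (∑ w : V, if ncDegree G w = d then Lmul G i u v w else 0) ≠
        (∑ w : V, if ncDegree G w = d then Lmul G i v u w else 0)) :
    ¬ crStableTrivial G u v :=
  stmt8_aux G u v huv h
end

section
/- Fix a positive integer n and a probability p ∈ (0,1/2). Let a_1,…,a_n be nonzero real numbers and let ξ_1,…,ξ_n be independent Bernoulli(p) random variables (each equal to 1 with probability p and to 0 with probability 1−p). Then for every real number x, Pr[a_1ξ_1 + ⋯ + a_nξ_n = x] ≤ M(⌊n/2⌋, p). -/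
/-!
Halász's Fourier-analytic argument. A `ℚ`-linear functional vanishing at no `aᵢ`, followed by
clearing denominators and reducing modulo a large prime `N`, replaces the `aᵢ` by nonzero
residues `cᵢ` without shrinking the event. Over `ZMod N`, Fourier inversion bounds the point
probability by `N⁻¹ ∑ₜ ∏ᵢ |φ(t cᵢ)|`, where `φ(u) = 1 - p + p e(u/N)` is the characteristic
function of a Bernoulli(p) variable. By AM-GM, and since `t ↦ t cᵢ` permutes `ZMod N`, this is
at most `N⁻¹ ∑ₜ |φ(t)|ⁿ ≤ N⁻¹ ∑ₜ |φ(t)|^(2m)` with `m = ⌊n/2⌋`, as `|φ| ≤ 1`. By Parseval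
(`m < N`) the last sum is `∑ₖ b(m,k)²` for the Binomial(m,p) weights `b(m,k)`; these sum to 1,
so this is at most the modal weight.
-/

open MeasureTheory Filter

open Finset

noncomputable def binomialWeight (m k : ℕ) (p : ℝ) : ℝ :=
  m.choose k * p ^ k * (1 - p) ^ (m - k)

namespace binomialWeight

variable {m k : ℕ} {p : ℝ}

lemma nonneg (hp0 : 0 ≤ p) (hp1 : p ≤ 1) : 0 ≤ binomialWeight m k p := by
  have : 0 ≤ 1 - p := by linarith
  unfold binomialWeight; positivity

lemma sum_eq_one : ∑ k ∈ range (m + 1), binomialWeight m k p = 1 := by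
  have h := (add_pow p (1 - p) m).symm
  rw [add_sub_cancel, one_pow] at h
  rw [← h]
  refine sum_congr rfl fun k _ => ?_
  unfold binomialWeight; ring

lemma succ_mul (hk : k < m) :
    binomialWeight m (k + 1) p * ((k + 1) * (1 - p)) =
      binomialWeight m k p * ((m - k : ℕ) * p) := by
  have hchoose : (m.choose (k + 1) : ℝ) * (k + 1) = m.choose k * (m - k : ℕ) := by
    exact_mod_cast Nat.choose_succ_right_eq m k
  have hexp : (1 - p) ^ (m - k) = (1 - p) ^ (m - (k + 1)) * (1 - p) := by
    rw [← pow_succ]; congr 1; omega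
  unfold binomialWeight
  rw [hexp, pow_succ]
  linear_combination (p ^ k * p * (1 - p) ^ (m - (k + 1)) * (1 - p)) * hchoose

lemma le_succ (hp0 : 0 ≤ p) (hp1 : p < 1) (hk : (k + 1 : ℝ) ≤ (m + 1) * p) :
    binomialWeight m k p ≤ binomialWeight m (k + 1) p := by
  have hkm : k < m := by
    have : (k : ℝ) < m := by nlinarith
    exact_mod_cast this
  have hratio : (k + 1 : ℝ) * (1 - p) ≤ (m - k : ℕ) * p := by
    rw [Nat.cast_sub hkm.le]; linarith
  have hpos : (0 : ℝ) < (k + 1) * (1 - p) := by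
    have : 0 < 1 - p := by linarith
    positivity
  refine le_of_mul_le_mul_right ?_ hpos
  rw [succ_mul hkm]
  exact mul_le_mul_of_nonneg_left hratio (nonneg hp0 hp1.le)

lemma succ_le (hp0 : 0 ≤ p) (hp1 : p < 1) (hk : (m + 1) * p < (k + 1 : ℝ)) :
    binomialWeight m (k + 1) p ≤ binomialWeight m k p := by
  rcases lt_or_ge k m with hkm | hmk
  · have hratio : ((m - k : ℕ) : ℝ) * p ≤ (k + 1) * (1 - p) := by
      rw [Nat.cast_sub hkm.le]; linarith
    have hpos : (0 : ℝ) < (k + 1) * (1 - p) := by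
      have : 0 < 1 - p := by linarith
      positivity
    refine le_of_mul_le_mul_right ?_ hpos
    rw [succ_mul hkm]
    exact mul_le_mul_of_nonneg_left hratio (nonneg hp0 hp1.le)
  · have : binomialWeight m (k + 1) p = 0 := by
      simp [binomialWeight, Nat.choose_eq_zero_of_lt (Nat.lt_succ_of_le hmk)]
    exact this ▸ nonneg hp0 hp1.le

lemma le_modalProb (hp0 : 0 ≤ p) (hp1 : p < 1) (m k : ℕ) :
    binomialWeight m k p ≤ modalProb m p := by
  set K := ⌊(m + 1 : ℝ) * p⌋₊
  change binomialWeight m k p ≤ binomialWeight m K p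
  have hK : (K : ℝ) ≤ (m + 1) * p := Nat.floor_le (by positivity)
  have hK' : (m + 1) * p < K + 1 := Nat.lt_floor_add_one _
  rcases le_total k K with hkK | hKk
  · induction hkK using Nat.decreasingInduction with
    | self => rfl
    | of_succ j hjK ih =>
      refine (le_succ hp0 hp1 ?_).trans ih
      have : ((j + 1 : ℕ) : ℝ) ≤ K := by exact_mod_cast hjK
      push_cast at this; linarith
  · induction k, hKk using Nat.le_induction with
    | base => rfl
    | succ j hKj ih =>
      refine (succ_le hp0 hp1 ?_).trans ih
      have : (K : ℝ) ≤ j := by exact_mod_cast hKj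
      linarith

lemma sum_sq_le_modalProb (hp0 : 0 ≤ p) (hp1 : p < 1) (m : ℕ) :
    ∑ k ∈ range (m + 1), binomialWeight m k p ^ 2 ≤ modalProb m p :=
  calc ∑ k ∈ range (m + 1), binomialWeight m k p ^ 2
      ≤ ∑ k ∈ range (m + 1), modalProb m p * binomialWeight m k p := by
        refine sum_le_sum fun k _ => ?_
        rw [sq]
        exact mul_le_mul_of_nonneg_right (le_modalProb hp0 hp1 m k) (nonneg hp0 hp1.le)
    _ = modalProb m p := by rw [← mul_sum, sum_eq_one, mul_one]

end binomialWeight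

section BoolSum

variable {ι M : Type*} [Fintype ι]

def boolSum [AddCommMonoid M] (c : ι → M) (f : ι → Bool) : M :=
  ∑ i, if f i then c i else 0

lemma map_boolSum {M' F : Type*} [AddCommMonoid M] [AddCommMonoid M'] [FunLike F M M']
    [AddMonoidHomClass F M M'] (χ : F) (c : ι → M) (f : ι → Bool) :
    χ (boolSum c f) = boolSum (fun i => χ (c i)) f := by
  simp only [boolSum, map_sum, apply_ite χ, map_zero]

noncomputable def bernoulliWeight (p : ℝ) (f : ι → Bool) : ℝ :=
  ∏ i, if f i then p else 1 - p

lemma bernoulliWeight_nonneg {p : ℝ} (hp0 : 0 ≤ p) (hp1 : p ≤ 1) (f : ι → Bool) :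
    0 ≤ bernoulliWeight p f :=
  prod_nonneg fun i _ => by split_ifs <;> linarith

variable [DecidableEq ι]

noncomputable def bernoulliSumProb [AddCommMonoid M] [DecidableEq M] (p : ℝ) (c : ι → M)
    (y : M) : ℝ :=
  ∑ f with boolSum c f = y, bernoulliWeight p f

lemma bernoulliProduct_setOf {q : ι → ℝ} (hq0 : ∀ i, 0 ≤ q i) (hq1 : ∀ i, q i ≤ 1)
    (P : (ι → Bool) → Prop) [DecidablePred P] :
    bernoulliProduct ι q {f | P f} =
      ENNReal.ofReal (∑ f with P f, ∏ i, if f i then q i else 1 - q i) := by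
  have hweight : ∀ f : ι → Bool, 0 ≤ ∏ i, if f i then q i else 1 - q i := fun f =>
    prod_nonneg fun i _ => by split_ifs <;> linarith [hq0 i, hq1 i]
  rw [bernoulliProduct, Measure.coe_finsetSum, Finset.sum_apply,
    ENNReal.ofReal_sum_of_nonneg fun f _ => hweight f, sum_filter]
  refine sum_congr rfl fun f _ => ?_
  rw [Measure.smul_apply, Measure.dirac_apply' _ (Set.toFinite _).measurableSet,
    smul_eq_mul, ENNReal.ofReal_prod_of_nonneg fun i _ => by
      split_ifs <;> linarith [hq0 i, hq1 i]]
  by_cases hf : P f <;> simp [hf, apply_ite ENNReal.ofReal]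

lemma exists_bernoulliSumProb_le_of_boolSum_eq_imp {M' : Type*} [AddCommMonoid M]
    [DecidableEq M] [AddCommMonoid M'] [DecidableEq M'] {p : ℝ} (hp0 : 0 ≤ p) (hp1 : p ≤ 1)
    {a : ι → M} {c : ι → M'} (hac : ∀ f g, boolSum a f = boolSum a g → boolSum c f = boolSum c g)
    (x : M) : ∃ y, bernoulliSumProb p a x ≤ bernoulliSumProb p c y := by
  by_cases hx : ∃ f₀, boolSum a f₀ = x
  · obtain ⟨f₀, hf₀⟩ := hx
    refine ⟨boolSum c f₀, sum_le_sum_of_subset_of_nonneg ?_ fun f _ _ =>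
      bernoulliWeight_nonneg hp0 hp1 f⟩
    intro f hf
    simp only [mem_filter, mem_univ, true_and] at hf ⊢
    exact hac f f₀ (hf.trans hf₀.symm)
  · simp only [not_exists] at hx
    refine ⟨0, ?_⟩
    rw [bernoulliSumProb, filter_false_of_mem fun f _ => hx f, sum_empty]
    exact sum_nonneg fun f _ => bernoulliWeight_nonneg hp0 hp1 f

end BoolSum

lemma exists_int_boolSum_eq_imp {ι : Type*} [Fintype ι] (a : ι → ℝ) (ha : ∀ i, a i ≠ 0) :
    ∃ z : ι → ℤ, (∀ i, z i ≠ 0) ∧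
      ∀ f g, boolSum a f = boolSum a g → boolSum z f = boolSum z g := by
  obtain ⟨φ, hφ⟩ := Module.exists_dual_forall_apply_ne_zero (K := ℚ) a ha
  obtain ⟨b, hb⟩ :=
    IsLocalization.exist_integer_multiples_of_finite (nonZeroDivisors ℤ) fun i => φ (a i)
  choose z hz using hb
  let χ : ℝ →+ ℚ := (b : ℤ) • φ.toAddMonoidHom
  have hχ : ∀ f, χ (boolSum a f) = boolSum z f := fun f => by
    rw [map_boolSum, ← eq_intCast (Int.castRingHom ℚ), map_boolSum]
    exact congrArg₂ boolSum (funext fun i => (hz i).symm) rfl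
  refine ⟨z, fun i hzi => ?_, fun f g hfg => Int.cast_injective (α := ℚ) ?_⟩
  · have := hz i
    rw [hzi, map_zero, eq_comm, smul_eq_zero] at this
    exact this.elim (nonZeroDivisors.coe_ne_zero b) (hφ i)
  · rw [← hχ, ← hχ, hfg]

lemma exists_zmod_boolSum_eq_imp {ι : Type*} [Fintype ι] (z : ι → ℤ) (hz : ∀ i, z i ≠ 0)
    (m : ℕ) : ∃ N, N.Prime ∧ m < N ∧ ∃ c : ι → ZMod N, (∀ i, c i ≠ 0) ∧
      ∀ f g, boolSum z f = boolSum z g → boolSum c f = boolSum c g := by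
  obtain ⟨N, hN, hNp⟩ := Nat.exists_infinite_primes (m + 1 + ∑ i, (z i).natAbs)
  refine ⟨N, hNp, by omega, fun i => z i, fun i hzi => ?_, fun f g hfg => ?_⟩
  · rw [ZMod.intCast_zmod_eq_zero_iff_dvd, Int.natCast_dvd] at hzi
    have hle : (z i).natAbs ≤ ∑ j, (z j).natAbs :=
      single_le_sum (f := fun j => (z j).natAbs) (fun j _ => Nat.zero_le _) (mem_univ i)
    have := Nat.le_of_dvd (Int.natAbs_pos.mpr (hz i)) hzi
    omega
  · have := congrArg (Int.castRingHom (ZMod N)) hfg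
    rwa [map_boolSum, map_boolSum] at this

lemma AddChar.map_sum_eq_prod {A R ι : Type*} [AddCommMonoid A] [CommMonoid R]
    (ψ : AddChar A R) (s : Finset ι) (x : ι → A) : ψ (∑ i ∈ s, x i) = ∏ i ∈ s, ψ (x i) := by
  classical
  induction s using Finset.induction_on with
  | empty => simp
  | insert j s hj ih => rw [sum_insert hj, prod_insert hj, AddChar.map_add_eq_mul, ih]

lemma prod_le_sum_pow_card_div_card {ι : Type*} [Fintype ι] [Nonempty ι] (x : ι → ℝ)
    (hx : ∀ i, 0 ≤ x i) : ∏ i, x i ≤ (∑ i, x i ^ Fintype.card ι) / Fintype.card ι := by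
  have hn : (Fintype.card ι : ℝ) ≠ 0 := Nat.cast_ne_zero.mpr Fintype.card_ne_zero
  have hamgm := Real.geom_mean_le_arith_mean_weighted univ (fun _ => (Fintype.card ι : ℝ)⁻¹)
    (fun i => x i ^ Fintype.card ι) (fun _ _ => by positivity)
    (by rw [sum_const, card_univ, nsmul_eq_mul, mul_inv_cancel₀ hn])
    (fun i _ => pow_nonneg (hx i) _)
  simp only [Real.pow_rpow_inv_natCast (hx _) Fintype.card_ne_zero, ← mul_sum] at hamgm
  rwa [div_eq_inv_mul]

section Fourier

open ZMod

variable {ι : Type*} [Fintype ι] [DecidableEq ι] {N : ℕ} [NeZero N]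

noncomputable def bernoulliCharFun (p : ℝ) (u : ZMod N) : ℂ :=
  1 - p + p * stdAddChar u

lemma sum_stdAddChar_mul (u : ZMod N) :
    ∑ t : ZMod N, stdAddChar (t * u) = if u = 0 then (N : ℂ) else 0 := by
  rw [AddChar.sum_mulShift u (isPrimitive_stdAddChar N), ZMod.card, Nat.cast_ite, Nat.cast_zero]

lemma sum_bernoulliWeight_mul_stdAddChar (p : ℝ) (c : ι → ZMod N) (t : ZMod N) :
    ∑ f : ι → Bool, (bernoulliWeight p f : ℂ) * stdAddChar (t * boolSum c f) =
      ∏ i, bernoulliCharFun p (t * c i) := by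
  have hfactor : ∀ i, bernoulliCharFun p (t * c i) =
      ∑ b : Bool, ((if b then p else 1 - p : ℝ) : ℂ) * stdAddChar (if b then t * c i else 0) := by
    intro i
    simp [bernoulliCharFun, add_comm]
  simp_rw [hfactor, Fintype.prod_sum, prod_mul_distrib, ← AddChar.map_sum_eq_prod]
  refine sum_congr rfl fun f _ => ?_
  simp [bernoulliWeight, boolSum, mul_sum, mul_ite]

lemma natCast_mul_bernoulliSumProb (p : ℝ) (c : ι → ZMod N) (y : ZMod N) :
    (N : ℂ) * bernoulliSumProb p c y =
      ∑ t, stdAddChar (-(t * y)) * ∏ i, bernoulliCharFun p (t * c i) := by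
  have hshift : ∀ t f, stdAddChar (-(t * y)) *
      ((bernoulliWeight p f : ℂ) * stdAddChar (t * boolSum c f)) =
        bernoulliWeight p f * stdAddChar (t * (boolSum c f - y)) := fun t f => by
    rw [mul_sub, sub_eq_neg_add, AddChar.map_add_eq_mul]
    ring
  simp_rw [← sum_bernoulliWeight_mul_stdAddChar, mul_sum, hshift]
  rw [sum_comm]
  simp_rw [← mul_sum, sum_stdAddChar_mul, sub_eq_zero, mul_ite, mul_zero, ← sum_filter,
    bernoulliSumProb, Complex.ofReal_sum, mul_sum, mul_comm]

lemma natCast_mul_bernoulliSumProb_le (p : ℝ) (c : ι → ZMod N) (y : ZMod N) :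
    N * bernoulliSumProb p c y ≤ ∑ t, ∏ i, ‖bernoulliCharFun p (t * c i)‖ :=
  calc N * bernoulliSumProb p c y
      ≤ ‖(N : ℂ) * bernoulliSumProb p c y‖ := by
        rw [norm_mul, Complex.norm_natCast, Complex.norm_real, Real.norm_eq_abs]
        exact mul_le_mul_of_nonneg_left (le_abs_self _) (Nat.cast_nonneg N)
    _ ≤ ∑ t, ∏ i, ‖bernoulliCharFun p (t * c i)‖ := by
        rw [natCast_mul_bernoulliSumProb]
        refine (norm_sum_le _ _).trans_eq (sum_congr rfl fun t _ => ?_)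
        rw [norm_mul, AddChar.norm_apply, one_mul, norm_prod]

lemma bernoulliCharFun_pow (p : ℝ) (m : ℕ) (u : ZMod N) :
    bernoulliCharFun p u ^ m =
      ∑ k ∈ range (m + 1), (binomialWeight m k p : ℂ) * stdAddChar ((k : ZMod N) * u) := by
  rw [bernoulliCharFun, add_comm, add_pow]
  refine sum_congr rfl fun k _ => ?_
  rw [mul_pow, ← AddChar.map_nsmul_eq_pow, nsmul_eq_mul, binomialWeight]
  push_cast
  ring

lemma sum_norm_bernoulliCharFun_pow (p : ℝ) {m : ℕ} (hm : m < N) :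
    ∑ u : ZMod N, ‖bernoulliCharFun p u‖ ^ (2 * m) =
      N * ∑ k ∈ range (m + 1), binomialWeight m k p ^ 2 := by
  set b : ℕ → ℂ := fun k => binomialWeight m k p
  have hcast : ∀ k ∈ range (m + 1), ∀ l ∈ range (m + 1), ((k : ZMod N) - l = 0 ↔ l = k) := by
    intro k hk l hl
    rw [sub_eq_zero, ZMod.natCast_eq_natCast_iff', Nat.mod_eq_of_lt, Nat.mod_eq_of_lt, eq_comm]
    all_goals linarith [mem_range.mp hk, mem_range.mp hl]
  have hnorm : ∀ u : ZMod N, (‖bernoulliCharFun p u‖ ^ (2 * m) : ℂ) =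
      ∑ k ∈ range (m + 1), ∑ l ∈ range (m + 1),
        b k * b l * stdAddChar (u * ((k : ZMod N) - (l : ZMod N))) := by
    intro u
    rw [pow_mul, ← Complex.mul_conj', mul_pow, ← map_pow, bernoulliCharFun_pow, map_sum,
      sum_mul_sum]
    refine sum_congr rfl fun k _ => sum_congr rfl fun l _ => ?_
    rw [map_mul (starRingEnd ℂ), ← AddChar.map_neg_eq_conj, Complex.conj_ofReal, mul_sub,
      sub_eq_add_neg, AddChar.map_add_eq_mul, mul_comm u, mul_comm u]
    ring
  apply Complex.ofReal_injective
  push_cast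
  simp_rw [hnorm]
  rw [sum_comm]
  refine (sum_congr rfl fun k hk => ?_).trans (mul_sum _ _ _).symm
  rw [sum_comm]
  simp_rw [← mul_sum, sum_stdAddChar_mul]
  rw [sum_congr rfl fun l hl => by rw [if_congr (hcast k hk l hl) rfl rfl]]
  simp_rw [mul_ite, mul_zero]
  rw [sum_ite_eq', if_pos hk]
  ring

lemma norm_bernoulliCharFun_le_one {p : ℝ} (hp0 : 0 ≤ p) (hp1 : p ≤ 1) (u : ZMod N) :
    ‖bernoulliCharFun p u‖ ≤ 1 :=
  calc ‖bernoulliCharFun p u‖ ≤ ‖((1 - p : ℝ) : ℂ)‖ + ‖(p : ℂ) * stdAddChar u‖ := by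
        rw [bernoulliCharFun, Complex.ofReal_sub, Complex.ofReal_one]
        exact norm_add_le _ _
    _ = 1 := by
        rw [norm_mul, AddChar.norm_apply, mul_one, Complex.norm_real, Complex.norm_real,
          Real.norm_of_nonneg hp0, Real.norm_of_nonneg (sub_nonneg.mpr hp1), sub_add_cancel]

theorem bernoulliSumProb_le_sum_sq_binomialWeight [Fact N.Prime] [Nonempty ι] {p : ℝ}
    (hp0 : 0 ≤ p) (hp1 : p ≤ 1) {c : ι → ZMod N} (hc : ∀ i, c i ≠ 0) (y : ZMod N) {m : ℕ}
    (hmN : m < N) (hm : 2 * m ≤ Fintype.card ι) :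
    bernoulliSumProb p c y ≤ ∑ k ∈ range (m + 1), binomialWeight m k p ^ 2 := by
  set n := Fintype.card ι with hn_def
  set g : ZMod N → ℝ := fun u => ‖bernoulliCharFun p u‖
  have hshift : ∀ i, ∑ t, g (t * c i) ^ n = ∑ u, g u ^ n := fun i =>
    Fintype.sum_equiv (Equiv.mulRight₀ (c i) (hc i)) _ _ fun _ => rfl
  have hn : (n : ℝ) ≠ 0 := Nat.cast_ne_zero.mpr Fintype.card_ne_zero
  refine le_of_mul_le_mul_left ?_ (Nat.cast_pos.mpr (NeZero.pos N))
  calc N * bernoulliSumProb p c y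
      ≤ ∑ t, ∏ i, g (t * c i) := natCast_mul_bernoulliSumProb_le p c y
    _ ≤ ∑ t, (∑ i, g (t * c i) ^ n) / n :=
        sum_le_sum fun t _ => prod_le_sum_pow_card_div_card _ fun i => norm_nonneg _
    _ = ∑ u, g u ^ n := by
        rw [← sum_div, sum_comm]
        simp_rw [hshift]
        rw [sum_const, card_univ, ← hn_def, nsmul_eq_mul, mul_div_cancel_left₀ _ hn]
    _ ≤ ∑ u, g u ^ (2 * m) := sum_le_sum fun u _ =>
        pow_le_pow_of_le_one (norm_nonneg _) (norm_bernoulliCharFun_le_one hp0 hp1 u) hm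
    _ = N * ∑ k ∈ range (m + 1), binomialWeight m k p ^ 2 := sum_norm_bernoulliCharFun_pow p hmN

end Fourier

/-- Theorem 2.18, Littlewood–Offord type anticoncentration.
For `n ≥ 1`, `p ∈ (0,1/2)`, nonzero reals `a i` and independent `Bernoulli(p)` variables
`ξ i`, the probability that `∑ a i ξ i = x` is at most the modal probability `M(⌊n/2⌋, p)`. -/
theorem stmt9 (n : ℕ) (hn : 0 < n) (p : ℝ) (hp0 : 0 < p) (hp1 : p < 1 / 2)
    (a : Fin n → ℝ) (ha : ∀ i, a i ≠ 0) (x : ℝ) :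
    bernoulliProduct (Fin n) (fun _ => p)
        {f | (∑ i : Fin n, if f i then a i else 0) = x}
      ≤ ENNReal.ofReal (modalProb (n / 2) p) := by
  have hp1' : p < 1 := by linarith
  obtain ⟨z, hz, haz⟩ := exists_int_boolSum_eq_imp a ha
  obtain ⟨N, hN, hmN, c, hc, hzc⟩ := exists_zmod_boolSum_eq_imp z hz (n / 2)
  have : Fact N.Prime := ⟨hN⟩
  have : NeZero N := ⟨hN.ne_zero⟩
  have : Nonempty (Fin n) := ⟨⟨0, hn⟩⟩
  obtain ⟨y, hy⟩ := exists_bernoulliSumProb_le_of_boolSum_eq_imp hp0.le hp1'.le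
    (fun f g h => hzc f g (haz f g h)) x
  rw [bernoulliProduct_setOf (fun _ => hp0.le) (fun _ => hp1'.le)]
  refine ENNReal.ofReal_le_ofReal ?_
  calc _ = bernoulliSumProb p a x := rfl
    _ ≤ bernoulliSumProb p c y := hy
    _ ≤ ∑ k ∈ range (n / 2 + 1), binomialWeight (n / 2) k p ^ 2 :=
        bernoulliSumProb_le_sum_sq_binomialWeight hp0.le hp1'.le hc y hmN
          (by rw [Fintype.card_fin]; omega)
    _ ≤ modalProb (n / 2) p := binomialWeight.sum_sq_le_modalProb hp0.le hp1' _
end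

section
/- Let c : V(H) → Ω be an equitable vertex-colouring of a finite graph H, and let L ∈ {0,1}^{Ω×Ω} be a symmetric matrix. Let H₁ = D_L(H,c) be the generalised disparity graph and H₂ = D(H,c) the disparity graph, and for a vertex v let X₁(v), X₂(v) denote the vertex sets of the connected components of v in H₁ and H₂ respectively. Then |X₂(v)| ≤ 2·|X₁(v)| for every vertex v. -/
open MeasureTheory Filter

section StmtElevenAux
open Classical

noncomputable def fcard {V : Type*} [Fintype V] (p : V → Prop) : ℕ :=
  (Finset.univ.filter p).card

variable {V : Type*} [Fintype V]

lemma fcard_eq_sum (p : V → Prop) : fcard p = ∑ x : V, if p x then 1 else 0 := by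
  rw [fcard, Finset.card_filter]

lemma fcard_congr {p q : V → Prop} (h : ∀ x, p x ↔ q x) : fcard p = fcard q := by
  have : p = q := funext fun x => propext (h x)
  rw [this]

lemma fcard_mono {p q : V → Prop} (h : ∀ x, p x → q x) : fcard p ≤ fcard q := by
  rw [fcard_eq_sum, fcard_eq_sum]
  refine Finset.sum_le_sum fun x _ => ?_
  by_cases hx : p x <;> simp [hx, h x]

lemma fcard_pos {p : V → Prop} {x : V} (h : p x) : 0 < fcard p := by
  rw [fcard]
  exact Finset.card_pos.2 ⟨x, by simp [h]⟩

lemma nat_card_eq_fcard (p : V → Prop) : Nat.card {x // p x} = fcard p := by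
  rw [Nat.card_eq_fintype_card, fcard]
  exact (Fintype.card_subtype p).trans (by congr 1)

lemma fcard_single (u : V) (p : V → Prop) :
    fcard (fun y => p y ∧ y = u) = if p u then 1 else 0 := by
  rw [fcard_eq_sum]
  trans (∑ x : V, if x = u then (if p x then (1:ℕ) else 0) else 0)
  · refine Finset.sum_congr rfl fun y _ => ?_
    by_cases h1 : y = u <;> by_cases h2 : p y <;> simp [h1, h2]
  · rw [Finset.sum_ite_eq' Finset.univ u (fun x => if p x then (1:ℕ) else 0)]
    simp

lemma fcard_add_split (p : V → Prop) (u : V) :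
    fcard p = fcard (fun y => p y ∧ y ≠ u) + (if p u then 1 else 0) := by
  rw [← fcard_single u p, fcard_eq_sum, fcard_eq_sum, fcard_eq_sum,
    ← Finset.sum_add_distrib]
  refine Finset.sum_congr rfl fun y _ => ?_
  by_cases h1 : y = u <;> by_cases h2 : p y <;> simp [h1, h2]

lemma sum_ite_const (P : V → Prop) (k : ℕ) :
    (∑ x : V, if P x then k else 0) = k * fcard P := by
  rw [fcard_eq_sum, Finset.mul_sum]
  refine Finset.sum_congr rfl fun x _ => ?_
  by_cases h : P x <;> simp [h]

lemma fcard_prod (q : V × V → Prop) :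
    fcard q = ∑ x : V, fcard (fun y => q (x, y)) := by
  rw [fcard_eq_sum, Fintype.sum_prod_type]
  exact Finset.sum_congr rfl fun x _ => (fcard_eq_sum _).symm

end StmtElevenAux

section StmtElevenMain
open Classical
variable {V : Type*} [Fintype V] {Ω : Type*} {H : SimpleGraph V} {c : V → Ω}

/-- degree of `u` into colour class `b` in graph `G`. -/
noncomputable def nb (c : V → Ω) (G : SimpleGraph V) (u : V) (b : Ω) : ℕ :=
  fcard (fun y => G.Adj u y ∧ c y = b)

/-- size of colour class `b`. -/
noncomputable def cls (c : V → Ω) (b : Ω) : ℕ := fcard (fun y : V => c y = b)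

open Classical in
/-- number of potential neighbours in class `b` of a vertex of class `a`. -/
noncomputable def mb (c : V → Ω) (a b : Ω) : ℕ := cls c b - (if a = b then 1 else 0)

lemma mb_off {u : V} {b : Ω} : mb c (c u) b = fcard (fun y => y ≠ u ∧ c y = b) := by
  have h := fcard_add_split (fun y : V => c y = b) u
  have h2 : fcard (fun y : V => c y = b ∧ y ≠ u) = fcard (fun y : V => y ≠ u ∧ c y = b) :=
    fcard_congr fun y => and_comm
  rw [mb, cls, h, h2]
  by_cases hb : c u = b
  · rw [if_pos hb]; omega
  · rw [if_neg hb]; omega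

lemma nb_le_mb {u : V} {b : Ω} (G : SimpleGraph V) : nb c G u b ≤ mb c (c u) b := by
  rw [mb_off, nb]
  exact fcard_mono fun y hy => ⟨fun h => (hy.1.ne (h ▸ rfl)).elim, hy.2⟩

lemma equit_nb (heq : IsEquitable H c) {u u' : V} (h : c u = c u') (b : Ω) :
    nb c H u b = nb c H u' b := by
  have := heq u u' h b
  rwa [nat_card_eq_fcard, nat_card_eq_fcard] at this

/-- generic handshake over a set closed under adjacency -/
lemma handshake (G : SimpleGraph V) (S : V → Prop) (hS : ∀ x y, S x → G.Adj x y → S y)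
    (a b : Ω) :
    (∑ x : V, if c x = a ∧ S x then nb c G x b else 0) =
    (∑ y : V, if c y = b ∧ S y then nb c G y a else 0) := by
  have key : ∀ (p q : Ω) (x : V), (if c x = p ∧ S x then nb c G x q else 0) =
      ∑ y : V, if (c x = p ∧ S x) ∧ (G.Adj x y ∧ c y = q) ∧ S y then 1 else 0 := by
    intro p q x
    by_cases hx : c x = p ∧ S x
    · rw [if_pos hx, nb, fcard_eq_sum]
      refine Finset.sum_congr rfl fun y _ => ?_
      by_cases hy : G.Adj x y ∧ c y = q
      · simp [hy, hx, hS x y hx.2 hy.1]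
      · simp [hy, hx]
    · rw [if_neg hx]
      symm
      refine Finset.sum_eq_zero fun y _ => ?_
      rw [if_neg (fun hh => hx hh.1)]
  rw [Finset.sum_congr rfl fun x _ => key a b x,
      Finset.sum_congr rfl fun y _ => key b a y, Finset.sum_comm]
  refine Finset.sum_congr rfl fun x _ => Finset.sum_congr rfl fun y _ => ?_
  refine if_congr ?_ rfl rfl
  constructor
  · rintro ⟨⟨h1, h2⟩, ⟨h3, h4⟩, h5⟩
    exact ⟨⟨h4, h5⟩, ⟨h3.symm, h1⟩, h2⟩
  · rintro ⟨⟨h1, h2⟩, ⟨h3, h4⟩, h5⟩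
    exact ⟨⟨h4, h5⟩, ⟨h3.symm, h1⟩, h2⟩

end StmtElevenMain

section StmtElevenMain2
open Classical
variable {V : Type*} [Fintype V] {Ω : Type*} {H : SimpleGraph V} {c : V → Ω}
  {L : Ω → Ω → Bool}

lemma exists_of_fcard_pos {p : V → Prop} (h : 0 < fcard p) : ∃ x, p x := by
  rw [fcard] at h
  obtain ⟨x, hx⟩ := Finset.card_pos.mp h
  exact ⟨x, (Finset.mem_filter.mp hx).2⟩

lemma fcard_piece (p q : V → Prop) :
    fcard p = fcard (fun y => p y ∧ q y) + fcard (fun y => p y ∧ ¬ q y) := by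
  rw [fcard_eq_sum, fcard_eq_sum, fcard_eq_sum, ← Finset.sum_add_distrib]
  refine Finset.sum_congr rfl fun y _ => ?_
  by_cases h1 : p y <;> by_cases h2 : q y <;> simp [h1, h2]

lemma fcard_or_le (p q : V → Prop) :
    fcard (fun y => p y ∨ q y) ≤ fcard p + fcard q := by
  rw [fcard_eq_sum, fcard_eq_sum, fcard_eq_sum, ← Finset.sum_add_distrib]
  refine Finset.sum_le_sum fun y _ => ?_
  by_cases h1 : p y <;> by_cases h2 : q y <;> simp [h1, h2]

lemma sum_class (S : V → Prop) (f : V → ℕ) {a : Ω} {n : ℕ}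
    (hf : ∀ x, c x = a ∧ S x → f x = n) :
    (∑ x : V, if c x = a ∧ S x then f x else 0) = n * fcard (fun x => c x = a ∧ S x) := by
  rw [← sum_ite_const (fun x => c x = a ∧ S x) n]
  refine Finset.sum_congr rfl fun x _ => ?_
  by_cases hx : c x = a ∧ S x
  · rw [if_pos hx, if_pos hx, hf x hx]
  · rw [if_neg hx, if_neg hx]

lemma handshake_prod (G : SimpleGraph V) (S : V → Prop)
    (hS : ∀ x y, S x → G.Adj x y → S y) {a b : Ω} {da db : ℕ}
    (ha : ∀ x, c x = a → nb c G x b = da) (hb : ∀ y, c y = b → nb c G y a = db) :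
    da * fcard (fun x => c x = a ∧ S x) = db * fcard (fun y => c y = b ∧ S y) := by
  have h := handshake (c := c) G S hS a b
  rw [sum_class S _ (fun x hx => ha x hx.1), sum_class S _ (fun y hy => hb y hy.1)] at h
  exact h

lemma fcard_trueand (a : Ω) :
    fcard (fun x : V => c x = a ∧ True) = cls c a := fcard_congr fun x => Iff.rfl.trans (iff_of_eq (and_true _))

/-- counting all ordered pairs between two colour classes -/
lemma maj_count1 (u w : V) :
    Nat.card {p : V × V // p.1 ≠ p.2 ∧ c p.1 = c u ∧ c p.2 = c w} =
      mb c (c u) (c w) * cls c (c u) := by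
  rw [nat_card_eq_fcard, fcard_prod]
  have key : ∀ x : V, fcard (fun y => x ≠ y ∧ c x = c u ∧ c y = c w) =
      if c x = c u then mb c (c u) (c w) else 0 := by
    intro x
    by_cases hx : c x = c u
    · rw [if_pos hx]
      have : fcard (fun y => x ≠ y ∧ c x = c u ∧ c y = c w) =
          fcard (fun y => y ≠ x ∧ c y = c w) :=
        fcard_congr fun y => ⟨fun h => ⟨h.1.symm, h.2.2⟩, fun h => ⟨h.1.symm, hx, h.2⟩⟩
      rw [this, ← mb_off, hx]
    · rw [if_neg hx]
      have : fcard (fun y => x ≠ y ∧ c x = c u ∧ c y = c w) = fcard (fun _ : V => False) :=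
        fcard_congr fun y => ⟨fun h => hx h.2.1, False.elim⟩
      rw [this, fcard_eq_sum]
      simp
  rw [Finset.sum_congr rfl fun x _ => key x, sum_ite_const]
  rfl

lemma maj_count2 (heq : IsEquitable H c) (u w : V) :
    Nat.card {p : V × V // p.1 ≠ p.2 ∧ c p.1 = c u ∧ c p.2 = c w ∧ H.Adj p.1 p.2} =
      nb c H u (c w) * cls c (c u) := by
  rw [nat_card_eq_fcard, fcard_prod]
  have key : ∀ x : V, fcard (fun y => x ≠ y ∧ c x = c u ∧ c y = c w ∧ H.Adj x y) =
      if c x = c u then nb c H u (c w) else 0 := by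
    intro x
    by_cases hx : c x = c u
    · rw [if_pos hx]
      have : fcard (fun y => x ≠ y ∧ c x = c u ∧ c y = c w ∧ H.Adj x y) =
          fcard (fun y => H.Adj x y ∧ c y = c w) :=
        fcard_congr fun y => ⟨fun h => ⟨h.2.2.2, h.2.2.1⟩, fun h => ⟨h.1.ne, hx, h.2, h.1⟩⟩
      rw [this]
      exact equit_nb heq hx _
    · rw [if_neg hx]
      have : fcard (fun y => x ≠ y ∧ c x = c u ∧ c y = c w ∧ H.Adj x y) =
          fcard (fun _ : V => False) :=
        fcard_congr fun y => ⟨fun h => hx h.2.1, False.elim⟩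
      rw [this, fcard_eq_sum]
      simp
  rw [Finset.sum_congr rfl fun x _ => key x, sum_ite_const]
  rfl

lemma maj_iff (heq : IsEquitable H c) (u w : V) :
    majority H (fun x y => c x = c y) u w ↔ mb c (c u) (c w) ≤ 2 * nb c H u (c w) := by
  have hA : 0 < cls c (c u) := fcard_pos rfl
  have e1 := maj_count1 (c := c) u w
  have e2 := maj_count2 heq u w
  unfold majority
  rw [e1, e2]
  constructor
  · intro h
    refine Nat.le_of_mul_le_mul_right ?_ hA
    calc mb c (c u) (c w) * cls c (c u) ≤ 2 * (nb c H u (c w) * cls c (c u)) := h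
      _ = 2 * nb c H u (c w) * cls c (c u) := by ring
  · intro h
    calc mb c (c u) (c w) * cls c (c u) ≤ 2 * nb c H u (c w) * cls c (c u) :=
          Nat.mul_le_mul_right _ h
      _ = 2 * (nb c H u (c w) * cls c (c u)) := by ring

lemma cond_symm_aux (heq : IsEquitable H c) (u w : V)
    (h : mb c (c u) (c w) ≤ 2 * nb c H u (c w)) :
    mb c (c w) (c u) ≤ 2 * nb c H w (c u) := by
  have hA : 0 < cls c (c u) := fcard_pos rfl
  have hB : 0 < cls c (c w) := fcard_pos rfl
  have hhs : nb c H u (c w) * cls c (c u) = nb c H w (c u) * cls c (c w) := by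
    have := handshake_prod (c := c) H (fun _ => True) (fun _ _ _ _ => trivial)
      (fun x hx => equit_nb heq hx (c w))
      (fun y hy => equit_nb heq hy (c u))
    rw [fcard_trueand, fcard_trueand] at this
    exact this
  have hmb : mb c (c u) (c w) * cls c (c u) = mb c (c w) (c u) * cls c (c w) := by
    by_cases hab : c u = c w
    · rw [hab]
    · rw [mb, mb, if_neg hab, if_neg (fun hh => hab hh.symm), Nat.sub_zero, Nat.sub_zero]
      rw [cls, cls]
      ring
  refine Nat.le_of_mul_le_mul_right ?_ hB
  calc mb c (c w) (c u) * cls c (c w) = mb c (c u) (c w) * cls c (c u) := hmb.symm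
    _ ≤ 2 * nb c H u (c w) * cls c (c u) := Nat.mul_le_mul_right _ h
    _ = 2 * (nb c H u (c w) * cls c (c u)) := by ring
    _ = 2 * (nb c H w (c u) * cls c (c w)) := by rw [hhs]
    _ = 2 * nb c H w (c u) * cls c (c w) := by ring

lemma xor_congr_right {a b b' : Prop} (h : b ↔ b') : Xor' a b ↔ Xor' a b' := by
  unfold Xor'
  constructor
  · rintro (⟨h1, h2⟩ | ⟨h1, h2⟩)
    · exact Or.inl ⟨h1, fun hb => h2 (h.mpr hb)⟩
    · exact Or.inr ⟨h.mp h1, h2⟩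
  · rintro (⟨h1, h2⟩ | ⟨h1, h2⟩)
    · exact Or.inl ⟨h1, fun hb => h2 (h.mp hb)⟩
    · exact Or.inr ⟨h.mpr h1, h2⟩

lemma xor_congr_left {a a' b : Prop} (h : a ↔ a') : Xor' a b ↔ Xor' a' b := by
  unfold Xor'
  rw [show a = a' from propext h]

lemma disp_adj (heq : IsEquitable H c) (u w : V) :
    (disparity H (fun x y => c x = c y)).Adj u w ↔
      u ≠ w ∧ Xor' (H.Adj u w) (mb c (c u) (c w) ≤ 2 * nb c H u (c w)) := by
  rw [disparity, SimpleGraph.fromRel_adj]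
  refine and_congr_right fun _ => ?_
  have h1 : Xor' (H.Adj u w) (majority H (fun x y => c x = c y) u w) ↔
      Xor' (H.Adj u w) (mb c (c u) (c w) ≤ 2 * nb c H u (c w)) :=
    xor_congr_right (maj_iff heq u w)
  have h2 : Xor' (H.Adj w u) (majority H (fun x y => c x = c y) w u) ↔
      Xor' (H.Adj u w) (mb c (c u) (c w) ≤ 2 * nb c H u (c w)) := by
    refine Iff.trans (xor_congr_left (H.adj_comm w u)) ?_
    refine Iff.trans (xor_congr_right (maj_iff heq w u)) ?_
    exact xor_congr_right ⟨cond_symm_aux heq w u, cond_symm_aux heq u w⟩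
  rw [show Xor' (H.Adj u w) (majority H (fun x y => c x = c y) u w) =
      Xor' (H.Adj u w) (mb c (c u) (c w) ≤ 2 * nb c H u (c w)) from propext h1,
    show Xor' (H.Adj w u) (majority H (fun x y => c x = c y) w u) =
      Xor' (H.Adj u w) (mb c (c u) (c w) ≤ 2 * nb c H u (c w)) from propext h2, or_self]

lemma gdisp_adj (hL : ∀ a b, L a b = L b a) (u w : V) :
    (gDisparity H c L).Adj u w ↔ u ≠ w ∧ Xor' (H.Adj u w) (L (c u) (c w) = true) := by
  rw [gDisparity, SimpleGraph.fromRel_adj]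
  refine and_congr_right fun _ => ?_
  have h2 : Xor' (H.Adj w u) (L (c w) (c u) = true) ↔
      Xor' (H.Adj u w) (L (c u) (c w) = true) := by
    refine Iff.trans (xor_congr_left (H.adj_comm w u)) (xor_congr_right (by rw [hL]))
  rw [show Xor' (H.Adj w u) (L (c w) (c u) = true) =
      Xor' (H.Adj u w) (L (c u) (c w) = true) from propext h2, or_self]

/-- degree formula for the generalised disparity graph -/
lemma nb_gdisp (hL : ∀ a b, L a b = L b a) (u : V) (b : Ω) :
    nb c (gDisparity H c L) u b =
      if L (c u) b = true then mb c (c u) b - nb c H u b else nb c H u b := by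
  by_cases hLb : L (c u) b = true
  · rw [if_pos hLb]
    have h1 : nb c (gDisparity H c L) u b = fcard (fun y => (y ≠ u ∧ ¬ H.Adj u y) ∧ c y = b) := by
      rw [nb]
      refine fcard_congr fun y => ?_
      constructor
      · rintro ⟨hadj, hy⟩
        rw [gdisp_adj hL] at hadj
        obtain ⟨hne, hx⟩ := hadj
        rw [hy] at hx
        rcases hx with ⟨h1, h2⟩ | ⟨h1, h2⟩
        · exact absurd hLb h2
        · exact ⟨⟨fun hh => hne hh.symm, h2⟩, hy⟩
      · rintro ⟨⟨hne, hnadj⟩, hy⟩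
        refine ⟨(gdisp_adj hL u y).mpr ⟨fun hh => hne hh.symm, Or.inr ⟨by rw [hy]; exact hLb, hnadj⟩⟩, hy⟩
    have h2 : mb c (c u) b = nb c H u b + fcard (fun y => (y ≠ u ∧ ¬ H.Adj u y) ∧ c y = b) := by
      rw [mb_off, fcard_piece (fun y => y ≠ u ∧ c y = b) (fun y => H.Adj u y)]
      congr 1
      · rw [nb]
        exact fcard_congr fun y => ⟨fun h => ⟨h.2, h.1.2⟩, fun h => ⟨⟨h.1.ne', h.2⟩, h.1⟩⟩
      · exact fcard_congr fun y => ⟨fun h => ⟨⟨h.1.1, h.2⟩, h.1.2⟩, fun h => ⟨⟨h.1.1, h.2⟩, h.1.2⟩⟩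
    omega
  · rw [if_neg hLb, nb, nb]
    refine fcard_congr fun y => ?_
    constructor
    · rintro ⟨hadj, hy⟩
      rw [gdisp_adj hL] at hadj
      obtain ⟨hne, hx⟩ := hadj
      rw [hy] at hx
      rcases hx with ⟨h1, h2⟩ | ⟨h1, h2⟩
      · exact ⟨h1, hy⟩
      · exact absurd h1 hLb
    · rintro ⟨hadj, hy⟩
      exact ⟨(gdisp_adj hL u y).mpr ⟨hadj.ne, Or.inl ⟨hadj, by rw [hy]; exact hLb⟩⟩, hy⟩

lemma nb_gdisp_const (heq : IsEquitable H c) (hL : ∀ a b, L a b = L b a) {x u : V}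
    (h : c x = c u) (b : Ω) :
    nb c (gDisparity H c L) x b = nb c (gDisparity H c L) u b := by
  rw [nb_gdisp hL, nb_gdisp hL, h, equit_nb heq h]

/-- density of the generalised disparity graph between discrepant classes -/
lemma gdisp_dense (hL : ∀ a b, L a b = L b a) {u : V} {b : Ω}
    (hdiff : ¬ ((L (c u) b = true) ↔ (mb c (c u) b ≤ 2 * nb c H u b))) :
    mb c (c u) b ≤ 2 * nb c (gDisparity H c L) u b := by
  have hle : nb c H u b ≤ mb c (c u) b := nb_le_mb H
  rw [nb_gdisp hL]
  by_cases hLb : L (c u) b = true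
  · rw [if_pos hLb]
    have : ¬ (mb c (c u) b ≤ 2 * nb c H u b) := fun hh => hdiff ⟨fun _ => hh, fun _ => hLb⟩
    omega
  · rw [if_neg hLb]
    have : mb c (c u) b ≤ 2 * nb c H u b := by
      by_contra hh
      exact hdiff ⟨fun h1 => absurd h1 hLb, fun h2 => absurd h2 hh⟩
    omega

end StmtElevenMain2

section StmtElevenFinal
open Classical
variable {V : Type*} [Fintype V] {Ω : Type*}

lemma fcard_false : fcard (fun _ : V => False) = 0 := by
  rw [fcard_eq_sum]
  simp

lemma fcard_fiberwise (c : V → Ω) (p : V → Prop) :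
    fcard p = ∑ b ∈ Finset.univ.image c, fcard (fun y => p y ∧ c y = b) := by
  rw [fcard_eq_sum]
  rw [Finset.sum_congr rfl fun b _ => fcard_eq_sum (fun y => p y ∧ c y = b), Finset.sum_comm]
  refine Finset.sum_congr rfl fun y _ => ?_
  symm
  by_cases hy : p y
  · trans (∑ b ∈ Finset.univ.image c, if c y = b then (1:ℕ) else 0)
    · refine Finset.sum_congr rfl fun b _ => ?_
      by_cases h : c y = b <;> simp [h, hy]
    · rw [Finset.sum_ite_eq (Finset.univ.image c) (c y) (fun _ => (1:ℕ))]
      simp [hy, Finset.mem_image]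
  · rw [if_neg hy]
    refine Finset.sum_eq_zero fun b _ => ?_
    rw [if_neg (fun hh => hy hh.1)]

theorem stmt11' (H : SimpleGraph V) (c : V → Ω)
    (heq : IsEquitable H c) (L : Ω → Ω → Bool) (hL : ∀ a b, L a b = L b a) (v : V) :
    Nat.card ↥(compSet (disparity H fun x y => c x = c y) v) ≤
      2 * Nat.card ↥(compSet (gDisparity H c L) v) := by
  set G₁ := gDisparity H c L with hG₁
  set G₂ := disparity H (fun x y => c x = c y) with hG₂
  set X : V → Prop := fun y => G₁.Reachable v y with hX
  have hXcl : ∀ x y, X x → G₁.Adj x y → X y := fun x y hx hxy => hx.trans hxy.reachable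
  set hc : Ω → Prop := fun b => cls c b ≤ 2 * fcard (fun y => c y = b ∧ X y) with hhc
  set Z : V → Prop := fun y => X y ∨ hc (c y) with hZdef
  -- closure of Z under G₂-adjacency
  have hZ : ∀ u w, Z u → G₂.Adj u w → Z w := by
    intro u w hu huw
    rw [hG₂, disp_adj heq] at huw
    obtain ⟨hne, hxor⟩ := huw
    -- a vertex of the class of `u` inside `X`
    obtain ⟨x₀, hx₀c, hx₀X⟩ : ∃ x₀, c x₀ = c u ∧ X x₀ := by
      rcases hu with hu | hu
      · exact ⟨u, rfl, hu⟩
      · have hpos : 0 < cls c (c u) := fcard_pos rfl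
        have : 0 < fcard (fun y => c y = c u ∧ X y) := by omega
        obtain ⟨x₀, hx₀⟩ := exists_of_fcard_pos this
        exact ⟨x₀, hx₀.1, hx₀.2⟩
    by_cases hcase : (L (c u) (c w) = true) ↔ (mb c (c u) (c w) ≤ 2 * nb c H u (c w))
    · -- agreement: the edge `uw` is also a `G₁` edge
      have hG1adj : G₁.Adj u w := by
        rw [hG₁, gdisp_adj hL]
        exact ⟨hne, (xor_congr_right hcase.symm).mp hxor⟩
      rcases hu with hu | hu
      · exact Or.inl (hXcl u w hu hG1adj)
      · by_cases hab : c u = c w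
        · exact Or.inr (hab ▸ hu)
        · -- use the handshake between the two classes
          right
          have hd1 : 0 < nb c G₁ u (c w) := fcard_pos ⟨hG1adj, rfl⟩
          have hs1 : nb c G₁ u (c w) * fcard (fun x => c x = c u ∧ X x) =
              nb c G₁ w (c u) * fcard (fun y => c y = c w ∧ X y) :=
            handshake_prod G₁ X hXcl
              (fun x hx => nb_gdisp_const heq hL hx _)
              (fun y hy => nb_gdisp_const heq hL hy _)
          have hs2 : nb c G₁ u (c w) * cls c (c u) = nb c G₁ w (c u) * cls c (c w) := by
            have := handshake_prod (c := c) (a := c u) (b := c w)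
              (da := nb c G₁ u (c w)) (db := nb c G₁ w (c u))
              G₁ (fun _ => True) (fun _ _ _ _ => trivial)
              (fun x hx => nb_gdisp_const heq hL hx _)
              (fun y hy => nb_gdisp_const heq hL hy _)
            rw [fcard_trueand, fcard_trueand] at this
            exact this
          have hApos : 0 < cls c (c u) := fcard_pos rfl
          have hd2 : 0 < nb c G₁ w (c u) := by
            rcases Nat.eq_zero_or_pos (nb c G₁ w (c u)) with h0 | h
            · rw [h0, zero_mul] at hs2
              exact absurd hs2 (by positivity)
            · exact h
          refine Nat.le_of_mul_le_mul_right ?_ hd2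
          calc cls c (c w) * nb c G₁ w (c u)
              = nb c G₁ u (c w) * cls c (c u) := by rw [hs2]; ring
            _ ≤ nb c G₁ u (c w) * (2 * fcard (fun y => c y = c u ∧ X y)) :=
                Nat.mul_le_mul_left _ hu
            _ = 2 * (nb c G₁ u (c w) * fcard (fun x => c x = c u ∧ X x)) := by ring
            _ = 2 * (nb c G₁ w (c u) * fcard (fun y => c y = c w ∧ X y)) := by rw [hs1]
            _ = 2 * fcard (fun y => c y = c w ∧ X y) * nb c G₁ w (c u) := by ring
    · -- discrepancy: the class of `w` is half covered by `X`
        right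
        have hdiff : ¬ ((L (c x₀) (c w) = true) ↔ (mb c (c x₀) (c w) ≤ 2 * nb c H x₀ (c w))) := by
          rw [hx₀c, equit_nb heq hx₀c]
          exact hcase
        have hdense := gdisp_dense (H := H) hL hdiff
        rw [hx₀c, ← hG₁] at hdense
        have hnbX : nb c G₁ x₀ (c w) ≤ fcard (fun y => (c y = c w ∧ X y) ∧ y ≠ x₀) := by
          rw [nb]
          refine fcard_mono fun y hy => ?_
          exact ⟨⟨hy.2, hXcl x₀ y hx₀X hy.1⟩, hy.1.ne'⟩
        have hsplit := fcard_add_split (fun y => c y = c w ∧ X y) x₀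
        have hmb : mb c (c u) (c w) = cls c (c w) - (if c u = c w then 1 else 0) := rfl
        by_cases hab : c u = c w
        · have hx₀w : c x₀ = c w := hx₀c.trans hab
          rw [if_pos hab] at hmb
          rw [if_pos (⟨hx₀w, hx₀X⟩ : c x₀ = c w ∧ X x₀)] at hsplit
          show cls c (c w) ≤ 2 * fcard (fun y => c y = c w ∧ X y)
          omega
        · rw [if_neg hab] at hmb
          have hnot : ¬ (c x₀ = c w ∧ X x₀) := fun h => hab (hx₀c.symm.trans h.1)
          rw [if_neg hnot] at hsplit
          show cls c (c w) ≤ 2 * fcard (fun y => c y = c w ∧ X y)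
          omega
  -- every vertex reachable from v in G₂ lies in Z
  have key : ∀ (x w : V) (p : G₂.Walk x w), Z x → Z w := by
    intro x w p
    induction p with
    | nil => exact id
    | cons h q ih => exact fun hx => ih (hZ _ _ hx h)
  have hreach : ∀ w, w ∈ compSet G₂ v → Z w := by
    intro w hw
    obtain ⟨p⟩ := (hw : G₂.Reachable v w)
    exact key v w p (Or.inl (SimpleGraph.Reachable.refl v))
  -- counting
  set W : V → Prop := fun y => ¬ X y ∧ hc (c y) with hW
  have h4 : fcard W ≤ fcard X := by
    rw [fcard_fiberwise c W, fcard_fiberwise c X]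
    refine Finset.sum_le_sum fun b _ => ?_
    by_cases hcb : hc b
    · have hsub : fcard (fun y => W y ∧ c y = b) ≤ fcard (fun y => c y = b ∧ ¬ X y) :=
        fcard_mono fun y hy => ⟨hy.2, hy.1.1⟩
      have hpiece := fcard_piece (fun y : V => c y = b) (fun y => X y)
      have hXb : fcard (fun y : V => c y = b ∧ X y) = fcard (fun y => X y ∧ c y = b) :=
        fcard_congr fun y => and_comm
      have hcb' : cls c b ≤ 2 * fcard (fun y => c y = b ∧ X y) := hcb
      rw [cls] at hcb'
      omega
    · have : fcard (fun y => W y ∧ c y = b) = fcard (fun _ : V => False) := by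
        refine fcard_congr fun y => ⟨fun hy => ?_, False.elim⟩
        exact hcb (hy.2 ▸ hy.1.2)
      rw [this, fcard_false]
      exact Nat.zero_le _
  have h2 : fcard (fun w => w ∈ compSet G₂ v) ≤ fcard Z := fcard_mono hreach
  have h3 : fcard Z ≤ fcard X + fcard W := by
    refine le_trans (le_of_eq (fcard_congr ?_)) (fcard_or_le X W)
    intro y
    constructor
    · intro hy
      by_cases hx : X y
      · exact Or.inl hx
      · rcases hy with hy | hy
        · exact absurd hy hx
        · exact Or.inr ⟨hx, hy⟩
    · rintro (hy | hy)
      · exact Or.inl hy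
      · exact Or.inr hy.2
  have e1 : Nat.card ↥(compSet G₂ v) = fcard (fun w => w ∈ compSet G₂ v) :=
    nat_card_eq_fcard _
  have e2 : Nat.card ↥(compSet G₁ v) = fcard X := nat_card_eq_fcard _
  rw [e1, e2]
  omega

end StmtElevenFinal


/-- Lemma 5.3.
For an equitable colouring `c` of a finite graph `H` and a symmetric 0-1 matrix `L` on
colours, the component of any vertex `v` in the disparity graph `D(H,c)` is at most twice as
large as its component in the generalised disparity graph `D_L(H,c)`. -/
theorem stmt11 {V : Type*} [Fintype V] {Ω : Type*} (H : SimpleGraph V) (c : V → Ω)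
    (heq : IsEquitable H c) (L : Ω → Ω → Bool) (hL : ∀ a b, L a b = L b a) (v : V) :
    Nat.card ↥(compSet (disparity H fun x y => c x = c y) v) ≤
      2 * Nat.card ↥(compSet (gDisparity H c L) v) :=
  stmt11' H c heq L hL v
end

section
/- Let H be a connected finite graph of maximum degree at most Δ, where Δ ≥ 2, and fix a vertex subset C ⊆ V(H). Then for every integer a with 1 ≤ a ≤ |C|, there exist a vertex y ∈ V(H) and a subset I ⊆ ℕ such that the number of vertices v ∈ C with dist_H(y,v) ∈ I is at least a and strictly less than a·Δ. -/
open MeasureTheory Filter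

/-!
Fix any vertex `y` and grow the ball `{w | dist y w < k}` one radius at a time. At the first
radius where the ball contains at least `a` vertices of `C`, either it contains fewer than `a·Δ`
(and we are done) or the last sphere alone contains at least `a` of them. A sphere of radius
`d + 1` around `y` is covered by the spheres of radius `d` around the at most `Δ` neighbours of
`y`, so if it holds at least `a·Δ` vertices of `C`, one of those smaller spheres holds at least
`a`. Descending in this way must stop at a sphere with between `a` and `a·Δ` vertices of `C`,
since a sphere of radius `0` holds at most one vertex.
-/

namespace SimpleGraph

variable {V : Type*} (H : SimpleGraph V)

theorem exists_adj_dist_eq_of_dist_eq_succ {y w : V} {d : ℕ} (h : H.dist y w = d + 1) :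
    ∃ x, H.Adj y x ∧ H.dist x w = d := by
  obtain ⟨p, hp⟩ := H.exists_walk_of_dist_ne_zero (by rw [h]; omega)
  cases p with
  | nil => simp at h
  | @cons _ x _ hadj q =>
    have hq : q.length = d := by simp only [Walk.length_cons] at hp; omega
    have hle : H.dist x w ≤ d := hq ▸ H.dist_le q
    have hge : H.dist y w ≤ H.dist y x + H.dist x w := q.reachable.dist_triangle_right y
    rw [h, dist_eq_one_iff_adj.mpr hadj] at hge
    exact ⟨x, hadj, by omega⟩

theorem ncDegree_eq_degree (v : V) [Fintype (H.neighborSet v)] : ncDegree H v = H.degree v := by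
  rw [← card_neighborSet_eq_degree, ← Nat.card_eq_fintype_card]
  rfl

noncomputable def distCount (C : Set V) (y : V) (I : Set ℕ) : ℕ :=
  Nat.card {w : V // w ∈ C ∧ H.dist y w ∈ I}

variable (C : Set V)

theorem distCount_eq_ncard (y : V) (I : Set ℕ) :
    H.distCount C y I = (C ∩ H.dist y ⁻¹' I).ncard :=
  Nat.card_coe_set_eq _

theorem distCount_singleton_zero_le_one (hconn : H.Connected) (y : V) :
    H.distCount C y {0} ≤ 1 := by
  rw [distCount_eq_ncard, ← Set.ncard_singleton y]
  refine Set.ncard_le_ncard fun w ⟨_, hw⟩ => ?_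
  exact (hconn.dist_eq_zero_iff.mp hw).symm

theorem distCount_Iio_succ_le (y : V) (k : ℕ) :
    H.distCount C y (Set.Iio (k + 1)) ≤ H.distCount C y (Set.Iio k) + H.distCount C y {k} := by
  have hsplit : Set.Iio (k + 1) = Set.Iio k ∪ {k} := by
    ext j
    simp only [Set.mem_Iio, Set.mem_union, Set.mem_singleton_iff]
    omega
  simp only [distCount_eq_ncard, hsplit, Set.preimage_union, Set.inter_union_distrib_left]
  exact Set.ncard_union_le _ _

theorem exists_distCount_Iio_eq_ncard [Finite V] (y : V) :
    ∃ k, H.distCount C y (Set.Iio k) = C.ncard := by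
  obtain ⟨k, hk⟩ := (Set.finite_range (H.dist y)).bddAbove
  refine ⟨k + 1, ?_⟩
  rw [distCount_eq_ncard, Set.preimage_eq_univ_iff.mpr, Set.inter_univ]
  exact fun _ ⟨w, hw⟩ => Nat.lt_succ_of_le (hw ▸ hk ⟨w, rfl⟩)

theorem distCount_singleton_succ_le_sum [Finite V] (y : V) [Fintype (H.neighborSet y)] (d : ℕ) :
    H.distCount C y {d + 1} ≤ ∑ x ∈ H.neighborFinset y, H.distCount C x {d} := by
  simp only [distCount_eq_ncard]
  refine le_trans (Set.ncard_le_ncard fun w ⟨hwC, hw⟩ => ?_)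
    ((H.neighborFinset y).set_ncard_biUnion_le _)
  obtain ⟨x, hadj, hx⟩ := H.exists_adj_dist_eq_of_dist_eq_succ hw
  exact Set.mem_biUnion (mem_neighborFinset H y x |>.mpr hadj) ⟨hwC, hx⟩

theorem exists_adj_lt_distCount_of_degree_mul_lt [Finite V] {y : V} [Fintype (H.neighborSet y)]
    {d m : ℕ} (h : H.degree y * m < H.distCount C y {d + 1}) :
    ∃ x, H.Adj y x ∧ m < H.distCount C x {d} := by
  have hsum : ∑ _x ∈ H.neighborFinset y, m < ∑ x ∈ H.neighborFinset y, H.distCount C x {d} := by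
    rw [Finset.sum_const, card_neighborFinset_eq_degree, smul_eq_mul]
    exact h.trans_le (H.distCount_singleton_succ_le_sum C y d)
  obtain ⟨x, hx, hlt⟩ := Finset.exists_lt_of_sum_lt hsum
  exact ⟨x, (H.mem_neighborFinset y x).mp hx, hlt⟩

variable [Fintype V] [DecidableRel H.Adj] {Δ a : ℕ}

theorem exists_distCount_mem_Ico_of_le_distCount_singleton (hconn : H.Connected) (hΔ : 2 ≤ Δ)
    (hdeg : ∀ v, H.degree v ≤ Δ) (ha : 1 ≤ a) {d : ℕ} {y : V} (hy : a ≤ H.distCount C y {d}) :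
    ∃ (y : V) (I : Set ℕ), a ≤ H.distCount C y I ∧ H.distCount C y I < a * Δ := by
  induction d generalizing y with
  | zero =>
    have := H.distCount_singleton_zero_le_one C hconn y
    exact ⟨y, {0}, hy, by nlinarith⟩
  | succ d ih =>
    by_cases hlt : H.distCount C y {d + 1} < a * Δ
    · exact ⟨y, {d + 1}, hy, hlt⟩
    have hmul : H.degree y * (a - 1) < H.distCount C y {d + 1} := by
      have : H.degree y * (a - 1) ≤ Δ * (a - 1) := Nat.mul_le_mul_right _ (hdeg y)
      have : Δ * (a - 1) < Δ * a := Nat.mul_lt_mul_of_pos_left (by omega) (by omega)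
      rw [mul_comm a] at hlt
      omega
    obtain ⟨x, -, hx⟩ := H.exists_adj_lt_distCount_of_degree_mul_lt C hmul
    exact ih (y := x) (by omega)

theorem exists_distCount_mem_Ico_of_le_distCount_Iio (hconn : H.Connected) (hΔ : 2 ≤ Δ)
    (hdeg : ∀ v, H.degree v ≤ Δ) (ha : 1 ≤ a) {k : ℕ} {y : V}
    (hy : a ≤ H.distCount C y (Set.Iio k)) :
    ∃ (y : V) (I : Set ℕ), a ≤ H.distCount C y I ∧ H.distCount C y I < a * Δ := by
  induction k with
  | zero => simp [distCount_eq_ncard] at hy; omega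
  | succ k ih =>
    by_cases hlt : H.distCount C y (Set.Iio (k + 1)) < a * Δ
    · exact ⟨y, _, hy, hlt⟩
    by_cases hk : a ≤ H.distCount C y (Set.Iio k)
    · exact ih hk
    have hsplit := H.distCount_Iio_succ_le C y k
    have h2a : a * 2 ≤ a * Δ := Nat.mul_le_mul_left a hΔ
    exact H.exists_distCount_mem_Ico_of_le_distCount_singleton C hconn hΔ hdeg ha
      (d := k) (y := y) (by omega)

end SimpleGraph

/-- Lemma 5.4.
In a connected finite graph of maximum degree at most `Δ ≥ 2`, for every vertex subset `C`
and every `1 ≤ a ≤ |C|` there are a vertex `y` and a set `I ⊆ ℕ` such that the number of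
vertices of `C` at distance (from `y`) in `I` lies in `[a, a·Δ)`. -/
theorem stmt12 {V : Type*} [Fintype V] (H : SimpleGraph V) (hconn : H.Connected)
    (Δ : ℕ) (hΔ : 2 ≤ Δ) (hdeg : ∀ v : V, ncDegree H v ≤ Δ)
    (C : Set V) (a : ℕ) (ha : 1 ≤ a) (haC : a ≤ Nat.card ↥C) :
    ∃ (y : V) (I : Set ℕ),
      a ≤ Nat.card {w : V // w ∈ C ∧ H.dist y w ∈ I} ∧
      Nat.card {w : V // w ∈ C ∧ H.dist y w ∈ I} < a * Δ := by
  classical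
  obtain ⟨y⟩ := hconn.nonempty
  obtain ⟨k, hk⟩ := H.exists_distCount_Iio_eq_ncard C y
  have hball : a ≤ H.distCount C y (Set.Iio k) := by rwa [hk, ← Nat.card_coe_set_eq]
  exact H.exists_distCount_mem_Ico_of_le_distCount_Iio C hconn hΔ
    (fun v => H.ncDegree_eq_degree v ▸ hdeg v) ha hball
end

section
/- Let F be a biregular bipartite graph with bipartition C ∪ B having at least one edge, in which every vertex of B has degree d_B (and every vertex of C has a common degree). Then there is a subset S ⊆ B of size at most |C|/(2·d_B) + 1 such that |N(S)| ≥ |C|/4, where N(S) denotes the set of vertices adjacent to at least one vertex of S. -/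
open MeasureTheory Filter

/-- Lemma 5.5.
In a nonempty biregular bipartite graph with parts `C` (here: the type `α`) and `B`
(here: the type `β`), where vertices of `B` have degree `d_B`, there is a set `S ⊆ B` of size
at most `|C|/(2 d_B) + 1` with `|N(S)| ≥ |C|/4`. -/
theorem stmt13 {α β : Type*} [Fintype α] [Fintype β] (E : α → β → Prop)
    (hedge : ∃ a b, E a b)
    (dB : ℕ) (hB : ∀ b : β, Nat.card {a : α // E a b} = dB)
    (dC : ℕ) (hC : ∀ a : α, Nat.card {b : β // E a b} = dC) :
    ∃ S : Finset β, (S.card : ℝ) ≤ (Fintype.card α : ℝ) / (2 * dB) + 1 ∧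
      (Fintype.card α : ℝ) / 4 ≤ (Nat.card {a : α // ∃ b ∈ S, E a b} : ℝ) := by
  classical
  obtain ⟨a0, b0, hab⟩ := hedge
  set n := Fintype.card α with hn
  set NS : Finset β → Finset α := fun S => Finset.univ.filter (fun a => ∃ b ∈ S, E a b)
    with hNS
  have hdBpos : 0 < dB := by
    rw [← hB b0]
    exact Nat.card_pos_iff.mpr ⟨⟨⟨a0, hab⟩⟩, Finite.of_fintype _⟩
  have hCa : ∀ a : α, (Finset.univ.filter (fun b => E a b)).card = dC := by
    intro a; rw [← hC a, Nat.card_eq_fintype_card, Fintype.card_subtype]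
  have hBb : ∀ b : β, (Finset.univ.filter (fun a => E a b)).card = dB := by
    intro b; rw [← hB b, Nat.card_eq_fintype_card, Fintype.card_subtype]
  have hdouble : n * dC = Fintype.card β * dB := by
    calc n * dC = ∑ _a : α, dC := by simp [hn, mul_comm]
      _ = ∑ a : α, (Finset.univ.filter fun b => E a b).card :=
            Finset.sum_congr rfl fun a _ => (hCa a).symm
      _ = ∑ a : α, ∑ b : β, if E a b then 1 else 0 :=
            Finset.sum_congr rfl fun a _ => Finset.card_filter _ _
      _ = ∑ b : β, ∑ a : α, if E a b then 1 else 0 := Finset.sum_comm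
      _ = ∑ b : β, (Finset.univ.filter fun a => E a b).card :=
            Finset.sum_congr rfl fun b _ => (Finset.card_filter _ _).symm
      _ = Fintype.card β * dB := by simp [hBb, mul_comm]
  -- counting step
  have hstep : ∀ S : Finset β, 4 * (NS S).card < n →
      ∃ b : β, dB ≤ 2 * (Finset.univ.filter (fun a => E a b ∧ a ∉ NS S)).card := by
    intro S hS
    by_contra hcon
    push_neg at hcon
    have hNSle : (NS S).card ≤ n := by
      simpa [hn] using Finset.card_le_card (Finset.filter_subset _ (Finset.univ : Finset α))
    have hT : ∑ b : β, (Finset.univ.filter (fun a => E a b ∧ a ∉ NS S)).card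
        = (n - (NS S).card) * dC := by
      calc ∑ b : β, (Finset.univ.filter (fun a => E a b ∧ a ∉ NS S)).card
          = ∑ b : β, ∑ a : α, if E a b ∧ a ∉ NS S then 1 else 0 :=
            Finset.sum_congr rfl fun b _ => Finset.card_filter _ _
        _ = ∑ a : α, ∑ b : β, if E a b ∧ a ∉ NS S then 1 else 0 := Finset.sum_comm
        _ = ∑ a : α, if a ∉ NS S then (Finset.univ.filter fun b => E a b).card else 0 := by
            refine Finset.sum_congr rfl fun a _ => ?_
            by_cases h : a ∈ NS S
            · rw [if_neg (by simp [h])]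
              simp [h]
            · rw [if_pos h, Finset.card_filter]
              exact Finset.sum_congr rfl fun b _ => by simp [h]
        _ = ∑ a ∈ Finset.univ.filter (fun a : α => a ∉ NS S),
              (Finset.univ.filter fun b => E a b).card := (Finset.sum_filter _ _).symm
        _ = ∑ a ∈ Finset.univ.filter (fun a : α => a ∉ NS S), dC := by
            refine Finset.sum_congr rfl fun a _ => hCa a
        _ = (Finset.univ.filter (fun a : α => a ∉ NS S)).card * dC := by
            simp [mul_comm]
        _ = (n - (NS S).card) * dC := by
            congr 1
            have := Finset.card_filter_add_card_filter_not
              (s := (Finset.univ : Finset α)) (p := fun a => a ∈ NS S)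
            have hu : (Finset.univ : Finset α).card = n := Finset.card_univ
            have h2 : (Finset.univ.filter (fun a : α => a ∈ NS S)) = NS S := by
              simp [Finset.filter_mem_eq_inter]
            rw [h2] at this
            omega
    have hsum : 2 * ((n - (NS S).card) * dC) + Fintype.card β ≤ Fintype.card β * dB := by
      rw [← hT]
      calc 2 * (∑ b : β, (Finset.univ.filter (fun a => E a b ∧ a ∉ NS S)).card)
            + Fintype.card β
          = ∑ b : β, (2 * (Finset.univ.filter (fun a => E a b ∧ a ∉ NS S)).card + 1) := by
            simp [Finset.sum_add_distrib, Finset.mul_sum]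
        _ ≤ ∑ _b : β, dB := Finset.sum_le_sum fun b _ => by
            have := hcon b; omega
        _ = Fintype.card β * dB := by simp [mul_comm]
    have hβpos : 0 < Fintype.card β := Fintype.card_pos_iff.mpr ⟨b0⟩
    have h2U : n ≤ 2 * (n - (NS S).card) := by omega
    have h3 : n * dC ≤ 2 * ((n - (NS S).card) * dC) := by
      have := Nat.mul_le_mul_right dC h2U
      rwa [mul_assoc] at this
    omega
  -- greedy induction
  have hgreedy : ∀ k : ℕ, ∃ S : Finset β, S.card ≤ k ∧
      (k * dB ≤ 2 * (NS S).card ∨ n ≤ 4 * (NS S).card) := by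
    intro k
    induction k with
    | zero => exact ⟨∅, le_refl _, Or.inl (by simp)⟩
    | succ k ih =>
      obtain ⟨S, hcard, hS⟩ := ih
      by_cases hbig : n ≤ 4 * (NS S).card
      · exact ⟨S, hcard.trans (Nat.le_succ k), Or.inr hbig⟩
      · have hS' : k * dB ≤ 2 * (NS S).card := by tauto
        obtain ⟨b, hb⟩ := hstep S (by omega)
        refine ⟨insert b S, ?_, Or.inl ?_⟩
        · exact (Finset.card_insert_le _ _).trans (by omega)
        · have hsub : NS S ∪ Finset.univ.filter (fun a => E a b ∧ a ∉ NS S)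
              ⊆ NS (insert b S) := by
            intro a ha
            simp only [hNS, Finset.mem_union, Finset.mem_filter, Finset.mem_univ,
              true_and] at ha ⊢
            rcases ha with ha | ⟨ha, _⟩
            · obtain ⟨b', hb', hE⟩ := ha
              exact ⟨b', Finset.mem_insert_of_mem hb', hE⟩
            · exact ⟨b, Finset.mem_insert_self b S, ha⟩
          have hdisj : Disjoint (NS S)
              (Finset.univ.filter (fun a => E a b ∧ a ∉ NS S)) := by
            rw [Finset.disjoint_right]
            intro a ha
            simp only [Finset.mem_filter] at ha
            exact ha.2.2
          have hle := Finset.card_le_card hsub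
          rw [Finset.card_union_of_disjoint hdisj] at hle
          have hkk : (k + 1) * dB = k * dB + dB := by ring
          omega
  -- conclude
  obtain ⟨S, hcard, hS⟩ := hgreedy (n / (2 * dB) + 1)
  have hkdB : n < (n / (2 * dB) + 1) * (2 * dB) := by
    have := Nat.div_add_mod n (2 * dB)
    have := Nat.mod_lt n (y := 2 * dB) (by omega)
    nlinarith [Nat.div_add_mod n (2 * dB)]
  have hfinal : n ≤ 4 * (NS S).card := by
    rcases hS with hS | hS
    · nlinarith
    · exact hS
  have hNcard : Nat.card {a : α // ∃ b ∈ S, E a b} = (NS S).card := by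
    rw [Nat.card_eq_fintype_card, Fintype.card_subtype]
  refine ⟨S, ?_, ?_⟩
  · have h1 : (S.card : ℝ) ≤ ((n / (2 * dB) + 1 : ℕ) : ℝ) := by exact_mod_cast hcard
    have h2 : ((n / (2 * dB) : ℕ) : ℝ) ≤ (n : ℝ) / ((2 * dB : ℕ) : ℝ) := Nat.cast_div_le
    push_cast at h1 h2 ⊢
    linarith
  · rw [hNcard]
    rw [div_le_iff₀ (by norm_num)]
    have : (n : ℝ) ≤ 4 * ((NS S).card : ℝ) := by exact_mod_cast hfinal
    linarith
end

section
/- Let H be an n-vertex graph and c : V(H) → Ω an equitable colouring. Let c' be a random refinement of c, obtained by independently, for each vertex, assigning it a new colour unique to that vertex with probability at least 0.7 (and otherwise keeping its colour under c). Then with high probability (with probability at least 1 − o(1) as n → ∞, uniformly over all choices of H, c and the individual recolouring probabilities) the disparity graph D(H, R*c') has maximum degree at most 4·log n. -/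
open MeasureTheory Filter

/-!
The stable colouring `R* c'` is equitable, and for an equitable colouring the disparity degree of
`v` is at most `max_{w ~ v} |N(v) △ N(w)|`. Indeed, if `v` has `d` neighbours and `d'`
non-neighbours other than itself in a class `B`, its `D`-neighbours in `B` are the vertices of the
minority side, so there are `min(d, d')` of them. As every vertex of `B` has the same number of
neighbours in the class `C` of `v`, double counting gives
`min(d, d') · |C| ≤ ∑_{w ∈ C} |(N(v) △ N(w)) ∩ B|`; sum over `B` and average over `C`.

On the other hand `v` and `w` stay together in `R* c'` only if no vertex of `N(v) △ N(w)`
received a colour of its own, since such a vertex separates them after one round. If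
`|N(v) △ N(w)| > 4 log n` this has probability at most `0.3 ^ (4 log n) = n ^ (4 log 0.3)`, and
`4 log 0.3 < -2`, so a union bound over the `n²` pairs finishes the proof.
-/

open Finset
open scoped symmDiff

/-- Equitability of the colouring whose colour classes are the classes of the equivalence `r`. -/
def IsEquitableRel {V : Type*} (H : SimpleGraph V) (r : V → V → Prop) : Prop :=
  ∀ a b, r a b → ∀ x, Nat.card {y // H.Adj a y ∧ r y x} = Nat.card {y // H.Adj b y ∧ r y x}

section ColourRefinement

variable {V Ω : Type*} (G : SimpleGraph V) (c : V → Ω)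

theorem crEquiv_equivalence : ∀ t, Equivalence (crEquiv G c t)
  | 0 => ⟨fun _ => rfl, Eq.symm, Eq.trans⟩
  | t + 1 =>
    have ih := crEquiv_equivalence t
    ⟨fun v => ⟨ih.refl v, fun _ => rfl⟩, fun h => ⟨ih.symm h.1, fun w => (h.2 w).symm⟩,
      fun h h' => ⟨ih.trans h.1 h'.1, fun w => (h.2 w).trans (h'.2 w)⟩⟩

theorem crEquiv_antitone {u v : V} : Antitone fun t => crEquiv G c t u v :=
  antitone_nat_of_succ_le fun _ h => h.1

theorem crStable_equivalence : Equivalence (crStable G c) :=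
  ⟨fun v t => (crEquiv_equivalence G c t).refl v,
    fun h t => (crEquiv_equivalence G c t).symm (h t),
    fun h h' t => (crEquiv_equivalence G c t).trans (h t) (h' t)⟩

theorem exists_crStable_iff_crEquiv [Finite V] :
    ∃ T, ∀ u v, crStable G c u v ↔ crEquiv G c T u v := by
  obtain ⟨T, hT⟩ := WellFoundedLT.antitone_chain_condition
    (f := fun t => {p : V × V | crEquiv G c t p.1 p.2})
    fun s t hst p hp => crEquiv_antitone G c hst hp
  refine ⟨T, fun u v => ⟨fun h => h T, fun h t => ?_⟩⟩
  rcases le_total t T with htT | hTt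
  · exact crEquiv_antitone G c htT h
  · exact (hT t hTt).subset (show (u, v) ∈ {p : V × V | crEquiv G c T p.1 p.2} from h)

theorem isEquitableRel_crStable [Finite V] : IsEquitableRel G (crStable G c) := by
  obtain ⟨T, hT⟩ := exists_crStable_iff_crEquiv G c
  intro a b hab x
  simpa only [hT] using (hab (T + 1)).2 x

theorem adj_iff_of_crEquiv_one_refineColor [Finite V] (f : V → Bool) {v w x : V}
    (h : crEquiv G (refineColor c f) 1 v w) (hx : f x = true) : G.Adj v x ↔ G.Adj w x := by
  have hcol : ∀ y, crEquiv G (refineColor c f) 0 y x ↔ y = x := fun y => by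
    refine ⟨fun hy => ?_, fun hy => hy ▸ rfl⟩
    change refineColor c f y = refineColor c f x at hy
    cases hy' : f y <;> simp_all [refineColor]
  have hnonempty : ∀ u, 0 < Nat.card {y // G.Adj u y ∧ crEquiv G (refineColor c f) 0 y x} ↔
      G.Adj u x := fun u => by
    simp only [hcol, Finite.card_pos_iff]
    exact ⟨fun ⟨⟨_, hy, rfl⟩⟩ => hy, fun hx => ⟨⟨x, hx, rfl⟩⟩⟩
  rw [← hnonempty, ← hnonempty, h.2 x]

end ColourRefinement

section Disparity

variable {V : Type*} {H : SimpleGraph V} {r : V → V → Prop}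

theorem majority_comm (u v : V) : majority H r u v ↔ majority H r v u := by
  have swap : ∀ P : V → V → Prop,
      Nat.card {p : V × V // P p.1 p.2} = Nat.card {p : V × V // P p.2 p.1} :=
    fun P => Nat.card_congr ((Equiv.prodComm V V).subtypeEquiv fun _ => Iff.rfl)
  unfold majority
  rw [swap fun a b => a ≠ b ∧ r a u ∧ r b v, swap fun a b => a ≠ b ∧ r a u ∧ r b v ∧ H.Adj a b]
  simp only [ne_comm, H.adj_comm, and_comm, and_left_comm]

theorem majority_congr_left (hr : Equivalence r) {u u' : V} (h : r u u') (v : V) :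
    majority H r u v ↔ majority H r u' v := by
  have hu : ∀ x, r x u ↔ r x u' :=
    fun x => ⟨fun hx => hr.trans hx h, fun hx => hr.trans hx (hr.symm h)⟩
  simp only [majority, hu]

theorem disparity_adj_iff (v u : V) :
    (disparity H r).Adj v u ↔ v ≠ u ∧ Xor (H.Adj v u) (majority H r u v) := by
  rw [disparity, SimpleGraph.fromRel_adj, majority_comm v u, H.adj_comm u v, or_self]
  exact Iff.rfl

theorem card_filter_product_eq_sum (B C : Finset V) (P : V × V → Prop) [DecidablePred P] :
    #{p ∈ B ×ˢ C | P p} = ∑ w ∈ C, #{u ∈ B | P (u, w)} := by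
  simp only [card_filter, sum_product_right]

variable [Fintype V] [DecidableRel H.Adj]

theorem sum_card_filter_mem_symmDiff [DecidableEq V] {B C : Finset V} {e : ℕ}
    (he : ∀ u ∈ B, #{w ∈ C | H.Adj u w} = e) (v : V) :
    ∑ w ∈ C, #{u ∈ B | u ∈ H.neighborFinset v ∆ H.neighborFinset w} =
      #{u ∈ B | H.Adj v u} * (#C - e) + #{u ∈ B | ¬H.Adj v u} * e := by
  have hcount : ∀ u ∈ B, #{w ∈ C | u ∈ H.neighborFinset v ∆ H.neighborFinset w} =
      if H.Adj v u then #C - e else e := by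
    intro u hu
    simp only [mem_symmDiff, SimpleGraph.mem_neighborFinset, H.adj_comm _ u]
    split_ifs with hvu
    · have := card_filter_add_card_filter_not (s := C) (H.Adj u)
      simp only [hvu, not_true, and_false, true_and, or_false, ← he u hu]
      rw [← this, Nat.add_sub_cancel_left]
    · simp [hvu, he u hu]
  calc _ = ∑ u ∈ B, #{w ∈ C | u ∈ H.neighborFinset v ∆ H.neighborFinset w} :=
        sum_card_bipartiteAbove_eq_sum_card_bipartiteBelow _
    _ = _ := by
      rw [sum_congr rfl hcount, sum_ite, sum_const, sum_const, smul_eq_mul, smul_eq_mul]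

section Classes

variable [DecidableRel r]

def classOf (r : V → V → Prop) [DecidableRel r] (u : V) : Finset V := {x | r x u}

@[simp]
theorem mem_classOf {u x : V} : x ∈ classOf r u ↔ r x u := by simp [classOf]

theorem IsEquitableRel.card_filter_adj_eq (heq : IsEquitableRel H r) {a b : V} (hab : r a b)
    (x : V) : #{y ∈ classOf r x | H.Adj a y} = #{y ∈ classOf r x | H.Adj b y} := by
  have := heq a b hab x
  simp only [Nat.card_eq_fintype_card, Fintype.card_subtype] at this
  simpa only [classOf, filter_filter, and_comm] using this

variable [DecidableEq V]

theorem majority_iff_card (u v : V) :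
    majority H r u v ↔ #{p ∈ classOf r u ×ˢ classOf r v | p.1 ≠ p.2} ≤
      2 * #{p ∈ classOf r u ×ˢ classOf r v | H.Adj p.1 p.2} := by
  have hpairs : ({p | p.1 ≠ p.2 ∧ r p.1 u ∧ r p.2 v} : Finset (V × V)) =
      {p ∈ classOf r u ×ˢ classOf r v | p.1 ≠ p.2} := by
    ext p
    simp only [mem_filter, mem_univ, mem_product, mem_classOf, true_and]
    tauto
  have hedges : ({p | p.1 ≠ p.2 ∧ r p.1 u ∧ r p.2 v ∧ H.Adj p.1 p.2} : Finset (V × V)) =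
      {p ∈ classOf r u ×ˢ classOf r v | H.Adj p.1 p.2} := by
    ext p
    simp only [mem_filter, mem_univ, mem_product, mem_classOf, true_and]
    exact ⟨fun h => ⟨⟨h.2.1, h.2.2.1⟩, h.2.2.2⟩, fun h => ⟨h.2.ne, h.1.1, h.1.2, h.2⟩⟩
  simp only [majority, Nat.card_eq_fintype_card, Fintype.card_subtype, hpairs, hedges]

/-- Counting the pairs between the two classes column by column, equitability makes every column
look like the row of `v`. -/
theorem IsEquitableRel.majority_iff (hr : Equivalence r) (heq : IsEquitableRel H r) (u v : V) :
    majority H r u v ↔ #((classOf r u).erase v) ≤ 2 * #{x ∈ classOf r u | H.Adj v x} := by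
  have hrow : ∀ w ∈ classOf r v, #{x ∈ classOf r u | x ≠ w} = #((classOf r u).erase v) := by
    intro w hw
    have hwv : r w v := mem_classOf.1 hw
    have hiff : w ∈ classOf r u ↔ v ∈ classOf r u := by
      simp only [mem_classOf]
      exact ⟨hr.trans (hr.symm hwv), hr.trans hwv⟩
    rw [filter_ne', card_erase_eq_ite, card_erase_eq_ite]
    simp only [hiff]
  have hedges : ∀ w ∈ classOf r v,
      #{x ∈ classOf r u | H.Adj x w} = #{x ∈ classOf r u | H.Adj v x} := by
    intro w hw
    simp only [← H.adj_comm w]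
    exact heq.card_filter_adj_eq (mem_classOf.1 hw) u
  have hC : 0 < #(classOf r v) := card_pos.2 ⟨v, mem_classOf.2 (hr.refl v)⟩
  rw [majority_iff_card, card_filter_product_eq_sum, card_filter_product_eq_sum,
    sum_congr rfl hrow, sum_congr rfl hedges, sum_const, sum_const, smul_eq_mul, smul_eq_mul,
    mul_left_comm, Nat.mul_le_mul_left_iff hC]

open Classical in
theorem card_filter_disparity_adj_eq_min (hr : Equivalence r) (heq : IsEquitableRel H r)
    (u₀ v : V) :
    #{u ∈ classOf r u₀ | (disparity H r).Adj v u} =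
      min #{u ∈ classOf r u₀ | H.Adj v u} #{u ∈ (classOf r u₀).erase v | ¬H.Adj v u} := by
  have hM := heq.majority_iff hr u₀ v
  set B := classOf r u₀
  have hadj : {u ∈ (B.erase v) | H.Adj v u} = {u ∈ B | H.Adj v u} := by
    ext u
    simp only [mem_filter, mem_erase]
    exact ⟨fun h => ⟨h.1.2, h.2⟩, fun h => ⟨⟨(H.ne_of_adj h.2).symm, h.1⟩, h.2⟩⟩
  have hsplit := card_filter_add_card_filter_not (s := B.erase v) (H.Adj v)
  rw [hadj] at hsplit
  have hdisp : ∀ u ∈ B, (disparity H r).Adj v u ↔ v ≠ u ∧ Xor (H.Adj v u) (majority H r u₀ v) :=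
    fun u hu => by rw [disparity_adj_iff, majority_congr_left hr (mem_classOf.1 hu)]
  by_cases hmaj : majority H r u₀ v
  · rw [min_eq_right (by have := hM.1 hmaj; omega)]
    congr 1
    ext u
    by_cases hu : u ∈ B
    · simp only [mem_filter, mem_erase, hu, hdisp u hu, hmaj, xor_iff_iff_not, ne_comm]
      simp
    · simp [hu]
  · rw [min_eq_left (by have := mt hM.2 hmaj; omega)]
    congr 1
    ext u
    by_cases hu : u ∈ B
    · simp only [mem_filter, hu, hdisp u hu, hmaj, xor_iff_iff_not]
      simpa using fun h => (H.ne_of_adj h)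
    · simp [hu]

open Classical in
theorem card_filter_disparity_adj_mul_le (hr : Equivalence r) (heq : IsEquitableRel H r)
    (u₀ v : V) :
    #{u ∈ classOf r u₀ | (disparity H r).Adj v u} * #(classOf r v) ≤
      ∑ w ∈ classOf r v, #{u ∈ classOf r u₀ | u ∈ H.neighborFinset v ∆ H.neighborFinset w} := by
  have he : ∀ u ∈ classOf r u₀,
      #{w ∈ classOf r v | H.Adj u w} = #{w ∈ classOf r v | H.Adj u₀ w} :=
    fun u hu => heq.card_filter_adj_eq (mem_classOf.1 hu) v
  have heC : #{w ∈ classOf r v | H.Adj u₀ w} ≤ #(classOf r v) := card_filter_le _ _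
  have hnadj : #{u ∈ (classOf r u₀).erase v | ¬H.Adj v u} ≤ #{u ∈ classOf r u₀ | ¬H.Adj v u} :=
    card_le_card (filter_subset_filter _ (erase_subset _ _))
  rw [card_filter_disparity_adj_eq_min hr heq, sum_card_filter_mem_symmDiff he v,
    ← Nat.sub_add_cancel heC, Nat.add_sub_cancel, mul_add]
  gcongr
  · exact min_le_left _ _
  · exact (min_le_right _ _).trans hnadj

end Classes

variable [DecidableEq V]

theorem exists_card_disparity_adj_le (hr : Equivalence r) (heq : IsEquitableRel H r) (v : V) :
    ∃ w, r v w ∧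
      Nat.card {u // (disparity H r).Adj v u} ≤ #(H.neighborFinset v ∆ H.neighborFinset w) := by
  classical
  let s : Setoid V := ⟨r, hr⟩
  have hfibre : ∀ (A : Finset V) (u₀ : V),
      {u ∈ A | Quotient.mk s u = Quotient.mk s u₀} = {u ∈ classOf r u₀ | u ∈ A} := by
    intro A u₀
    ext u
    simp only [mem_filter, mem_classOf, Quotient.eq]
    exact and_comm
  have hsum : ∀ A : Finset V, #A = ∑ q : Quotient s, #{u ∈ A | Quotient.mk s u = q} :=
    fun A => card_eq_sum_card_fiberwise fun _ _ => mem_univ _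
  have hdeg : Nat.card {u // (disparity H r).Adj v u} * #(classOf r v) ≤
      ∑ w ∈ classOf r v, #(H.neighborFinset v ∆ H.neighborFinset w) := by
    rw [Nat.card_eq_fintype_card, Fintype.card_subtype, hsum, sum_mul]
    calc _ ≤ ∑ q : Quotient s, ∑ w ∈ classOf r v,
          #{u ∈ H.neighborFinset v ∆ H.neighborFinset w | Quotient.mk s u = q} := by
          refine sum_le_sum fun q _ => Quotient.inductionOn q fun u₀ => ?_
          simp only [hfibre, mem_filter, mem_univ, true_and]
          exact card_filter_disparity_adj_mul_le hr heq u₀ v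
      _ = _ := by
          rw [sum_comm]
          exact sum_congr rfl fun w _ => (hsum _).symm
  obtain ⟨w, hw, hle⟩ := exists_le_of_sum_le ⟨v, mem_classOf.2 (hr.refl v)⟩
    (f := fun _ => Nat.card {u // (disparity H r).Adj v u})
    (g := fun w => #(H.neighborFinset v ∆ H.neighborFinset w))
    (by rwa [sum_const, smul_eq_mul, mul_comm])
  exact ⟨w, hr.symm (mem_classOf.1 hw), hle⟩

end Disparity
section BernoulliProduct

variable {ι : Type*} [Fintype ι] [DecidableEq ι]

theorem bernoulliProduct_pi (q : ι → ℝ) (S : ι → Finset Bool) :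
    bernoulliProduct ι q {f | ∀ i, f i ∈ S i} =
      ∏ i, ∑ b ∈ S i, if b then ENNReal.ofReal (q i) else ENNReal.ofReal (1 - q i) := by
  simp_rw [← Fintype.sum_ite_mem (S _), Fintype.prod_sum, prod_ite_zero, bernoulliProduct,
    Measure.coe_finsetSum, Finset.sum_apply, Measure.smul_apply, smul_eq_mul,
    Measure.dirac_apply' _ MeasurableSet.of_discrete, Set.indicator_apply, Set.mem_ofPred_eq,
    Pi.one_apply, mul_ite, mul_one, mul_zero, mem_univ, true_imp_iff]

variable {q : ι → ℝ}

theorem ENNReal.ofReal_add_ofReal_one_sub {x : ℝ} (hx : 0 ≤ x ∧ x ≤ 1) :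
    ENNReal.ofReal x + ENNReal.ofReal (1 - x) = 1 := by
  rw [← ENNReal.ofReal_add hx.1 (by linarith), add_sub_cancel, ENNReal.ofReal_one]

theorem isProbabilityMeasure_bernoulliProduct (hq : ∀ i, 0 ≤ q i ∧ q i ≤ 1) :
    IsProbabilityMeasure (bernoulliProduct ι q) := by
  constructor
  have huniv := bernoulliProduct_pi q fun _ => univ
  simp only [mem_univ, implies_true, Set.ofPred_true, Fintype.sum_bool, if_true,
    Bool.false_eq_true, if_false] at huniv
  rw [huniv]
  exact prod_eq_one fun i _ => ENNReal.ofReal_add_ofReal_one_sub (hq i)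

theorem bernoulliProduct_forall_false (hq : ∀ i, 0 ≤ q i ∧ q i ≤ 1) (T : Finset ι) :
    bernoulliProduct ι q {f | ∀ i ∈ T, f i = false} = ∏ i ∈ T, ENNReal.ofReal (1 - q i) := by
  have hT : {f : ι → Bool | ∀ i ∈ T, f i = false} =
      {f | ∀ i, f i ∈ if i ∈ T then {false} else univ} := by
    ext f
    simp only [Set.mem_ofPred_eq]
    refine forall_congr' fun i => ?_
    split_ifs <;> simp [*]
  rw [hT, bernoulliProduct_pi, ← prod_ite_mem_eq T]
  refine prod_congr rfl fun i _ => ?_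
  split_ifs
  · simp
  · simp only [Fintype.sum_bool, if_true, Bool.false_eq_true, if_false]
    exact ENNReal.ofReal_add_ofReal_one_sub (hq i)

theorem bernoulliProduct_forall_false_le {p : ℝ} (hp0 : 0 < p) (hp1 : p ≤ 1)
    (hq : ∀ i, 1 - p ≤ q i ∧ q i ≤ 1) (T : Finset ι) {t : ℝ} (ht : t ≤ #T) :
    bernoulliProduct ι q {f | ∀ i ∈ T, f i = false} ≤ ENNReal.ofReal (p ^ t) := by
  rw [bernoulliProduct_forall_false fun i => ⟨by linarith [hq i], (hq i).2⟩]
  calc ∏ i ∈ T, ENNReal.ofReal (1 - q i) ≤ ∏ _i ∈ T, ENNReal.ofReal p :=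
        prod_le_prod' fun i _ => ENNReal.ofReal_le_ofReal (by linarith [hq i])
    _ = ENNReal.ofReal (p ^ (#T : ℝ)) := by
        rw [prod_const, ← ENNReal.ofReal_pow hp0.le, Real.rpow_natCast]
    _ ≤ ENNReal.ofReal (p ^ t) :=
        ENNReal.ofReal_le_ofReal (Real.rpow_le_rpow_of_exponent_ge hp0 hp1 ht)

end BernoulliProduct

theorem tendsto_measure_of_measure_compl_le {α : ℕ → Type*} [∀ n, MeasurableSpace (α n)]
    {μ : ∀ n, Measure (α n)} [∀ n, IsProbabilityMeasure (μ n)] {s : ∀ n, Set (α n)}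
    (hs : ∀ n, MeasurableSet (s n)) {δ : ℕ → ℝ} (hδ : Tendsto δ atTop (nhds 0))
    (h : ∀ n, μ n (s n)ᶜ ≤ ENNReal.ofReal (δ n)) :
    Tendsto (fun n => μ n (s n)) atTop (nhds 1) := by
  have hcompl : Tendsto (fun n => μ n (s n)ᶜ) atTop (nhds 0) := by
    refine tendsto_of_tendsto_of_tendsto_of_le_of_le tendsto_const_nhds ?_ (fun _ => zero_le) h
    simpa using ENNReal.tendsto_ofReal hδ
  have hlim := ENNReal.Tendsto.sub tendsto_const_nhds hcompl (Or.inl ENNReal.one_ne_top)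
  rw [tsub_zero] at hlim
  refine hlim.congr fun n => ?_
  rw [prob_compl_eq_one_sub (hs n), ENNReal.sub_sub_cancel ENNReal.one_ne_top prob_le_one]

theorem tendsto_natCast_sq_mul_rpow_mul_log {p k : ℝ} (hp : 0 < p) (hk : 2 + k * Real.log p < 0) :
    Tendsto (fun n : ℕ => (n : ℝ) ^ 2 * p ^ (k * Real.log n)) atTop (nhds 0) := by
  have hlim : Tendsto (fun n : ℕ => (n : ℝ) ^ (-(-(2 + k * Real.log p)))) atTop (nhds 0) :=
    (tendsto_rpow_neg_atTop (by linarith)).comp tendsto_natCast_atTop_atTop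
  refine hlim.congr' ?_
  filter_upwards [eventually_gt_atTop 0] with n hn
  have hn' : (0 : ℝ) < n := Nat.cast_pos.2 hn
  rw [neg_neg, Real.rpow_add hn', Real.rpow_two, Real.rpow_def_of_pos hp, Real.rpow_def_of_pos hn']
  ring_nf

theorem bernoulliProduct_exists_disparity_degree_gt_le {V Ω : Type*} [Fintype V] [DecidableEq V]
    (H : SimpleGraph V) (c : V → Ω) {p : ℝ} (hp0 : 0 < p) (hp1 : p ≤ 1) {q : V → ℝ}
    (hq : ∀ v, 1 - p ≤ q v ∧ q v ≤ 1) (t : ℝ) :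
    bernoulliProduct V q {f | ∃ v, t <
        (Nat.card {u // (disparity H (crStable H (refineColor c f))).Adj v u} : ℝ)} ≤
      ENNReal.ofReal (Fintype.card V ^ 2 * p ^ t) := by
  classical
  set Δ : V → V → Finset V := fun v w => H.neighborFinset v ∆ H.neighborFinset w
  set bad : Finset (V × V) := {vw | t < #(Δ vw.1 vw.2)}
  have hsub : {f | ∃ v, t <
      (Nat.card {u // (disparity H (crStable H (refineColor c f))).Adj v u} : ℝ)} ⊆
        ⋃ vw ∈ bad, {f | ∀ x ∈ Δ vw.1 vw.2, f x = false} := by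
    rintro f ⟨v, hv⟩
    obtain ⟨w, hvw, hle⟩ := exists_card_disparity_adj_le (crStable_equivalence H _)
      (isEquitableRel_crStable H _) v
    have hbad : (v, w) ∈ bad := mem_filter.2 ⟨mem_univ _, hv.trans_le (by exact_mod_cast hle)⟩
    refine Set.mem_biUnion hbad fun x hx => ?_
    by_contra hfx
    have hsep := adj_iff_of_crEquiv_one_refineColor H c f (hvw 1) (by simpa using hfx)
    simp [Δ, mem_symmDiff, hsep] at hx
  calc _ ≤ bernoulliProduct V q (⋃ vw ∈ bad, {f | ∀ x ∈ Δ vw.1 vw.2, f x = false}) :=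
        measure_mono hsub
    _ ≤ ∑ vw ∈ bad, bernoulliProduct V q {f | ∀ x ∈ Δ vw.1 vw.2, f x = false} :=
        measure_biUnion_finset_le _ _
    _ ≤ ∑ _vw ∈ bad, ENNReal.ofReal (p ^ t) :=
        sum_le_sum fun vw hvw =>
          bernoulliProduct_forall_false_le hp0 hp1 hq _ (mem_filter.1 hvw).2.le
    _ ≤ ENNReal.ofReal (Fintype.card V ^ 2 * p ^ t) := by
        rw [sum_const, nsmul_eq_mul, ENNReal.ofReal_mul (by positivity)]
        gcongr
        have hcard : #bad ≤ Fintype.card V ^ 2 :=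
          (card_filter_le _ _).trans_eq (by rw [card_univ, Fintype.card_prod, sq])
        rw [← Nat.cast_pow, ENNReal.ofReal_natCast]
        exact_mod_cast hcard

theorem stmt14_general (Ω : ℕ → Type) (H : ∀ n : ℕ, SimpleGraph (Fin n))
    (c : ∀ n : ℕ, Fin n → Ω n)
    (q : ∀ n : ℕ, Fin n → ℝ) (hq : ∀ n v, 0.7 ≤ q n v ∧ q n v ≤ 1) :
    Tendsto (fun n : ℕ =>
      bernoulliProduct (Fin n) (q n)
        {f | ∀ v : Fin n,
          (Nat.card {u : Fin n //
              (disparity (H n) (crStable (H n) (refineColor (c n) f))).Adj v u} : ℝ)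
            ≤ 4 * Real.log n})
      atTop (nhds 1) := by
  have hq' : ∀ n (v : Fin n), 1 - 0.3 ≤ q n v ∧ q n v ≤ 1 :=
    fun n v => ⟨by linarith [hq n v], (hq n v).2⟩
  have hprob := fun n => isProbabilityMeasure_bernoulliProduct fun v : Fin n =>
    ⟨by linarith [hq n v], (hq n v).2⟩
  have hlog : 2 + 4 * Real.log 0.3 < 0 := by
    have : Real.log 0.3 < -1 / 2 := by
      rw [Real.log_lt_iff_lt_exp (by norm_num)]
      linarith [Real.add_one_le_exp (-1 / 2)]
    linarith
  refine tendsto_measure_of_measure_compl_le (fun _ => MeasurableSet.of_discrete)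
    (tendsto_natCast_sq_mul_rpow_mul_log (by norm_num) hlog) fun n => ?_
  simpa only [Set.compl_ofPred, not_forall, not_le, Fintype.card_fin] using
    bernoulliProduct_exists_disparity_degree_gt_le (H n) (c n) (by norm_num) (by norm_num) (hq' n)
      (4 * Real.log n)

/-- Lemma 5.6.
For an `n`-vertex graph `H` with equitable colouring `c`, if each vertex is independently
given a brand-new unique colour with probability at least `0.7`, then whp the disparity graph
`D(H, R*c')` of the resulting refined colouring has maximum degree at most `4·log n`. -/
theorem stmt14 (Ω : ℕ → Type) (H : ∀ n : ℕ, SimpleGraph (Fin n))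
    (c : ∀ n : ℕ, Fin n → Ω n) (heq : ∀ n, IsEquitable (H n) (c n))
    (q : ∀ n : ℕ, Fin n → ℝ) (hq : ∀ n v, 0.7 ≤ q n v ∧ q n v ≤ 1) :
    Tendsto (fun n : ℕ =>
      bernoulliProduct (Fin n) (q n)
        {f | ∀ v : Fin n,
          (Nat.card {u : Fin n //
              (disparity (H n) (crStable (H n) (refineColor (c n) f))).Adj v u} : ℝ)
            ≤ 4 * Real.log n})
      atTop (nhds 1) :=
  stmt14_general Ω H c q hq
end

section
/- Let k ≥ 1 be an integer and let G be a connected finite graph containing no connected subgraph on at most 20k vertices with at least two cycles (equivalently, no connected subgraph on at most 20k vertices whose number of edges exceeds its number of vertices). Let u, v be two distinct vertices in V_{2,3}(G). Then for every i with 1 ≤ i ≤ k there is a vertex w such that either dist_G(u,w) = i and dist_G(v,w) > i, or dist_G(v,w) = i and dist_G(u,w) > i. -/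
open MeasureTheory Filter

/-!
Fix a breadth-first-search tree of `G` rooted at `u`; the branch of a vertex `x ≠ u` is the child
of `u` above it. Two distinct non-tree edges within distance `3i + 1` of `u`, together with the
tree paths from `u` to their ends, span a connected subgraph on at most `12i + 8 ≤ 20k` vertices
with two more edges than a spanning tree; so there is at most one such edge.

Suppose every vertex at distance `i` from one of `u`, `v` is within distance `i` of the other;
then `dist(u,v) ≤ 2i`. Going down the tree from a 2-core child `a` of `u` through 2-core vertices,
one meets a non-tree edge in the branch of `a` before depth `i`, or else a vertex `w` at depth
`i`; a shortest path from `w` to `v` avoids `u`, so it leaves the branch of `a` through a non-tree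
edge unless `a` is the branch of `v`. Similarly the branch of `v` carries a non-tree edge: two
non-tree edges at `v` are excluded, so `v` has a 2-core child, and going down from it cannot
reach depth `i` below `v`, as that vertex would be at distance exactly `i` from `v` and more
than `i` from `u`. As `u ∈ V_{2,3}` has two 2-core children besides the branch of `v`, this
yields near non-tree edges in three different branches, yet there is only one.
-/

namespace SimpleGraph

open Finset

variable {V : Type*} {G : SimpleGraph V} {u v w x y : V}

lemma dist_le_dist_add_one_of_adj (h : G.Adj x y) : G.dist u y ≤ G.dist u x + 1 := by
  simpa [dist_eq_one_iff_adj.mpr h] using h.reachable.dist_triangle_right u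

lemma Walk.dist_add_dist_le_length (p : G.Walk v w) (hx : x ∈ p.support) :
    G.dist v x + G.dist x w ≤ p.length := by
  classical
  have := congrArg Walk.length (p.take_spec hx)
  rw [Walk.length_append] at this
  have := dist_le (p.takeUntil x hx)
  have := dist_le (p.dropUntil x hx)
  omega

lemma Connected.exists_dist_eq_of_le_dist (hconn : G.Connected) {j : ℕ} (hj : j ≤ G.dist u v) :
    ∃ m, G.dist u m = j ∧ G.dist m v = G.dist u v - j := by
  obtain ⟨p, hp⟩ := hconn.exists_walk_length_eq_dist u v
  have h₁ := dist_le (p.take j)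
  have h₂ := dist_le (p.drop j)
  have h₃ : G.dist u v ≤ _ + _ := hconn.dist_triangle (v := p.getVert j)
  rw [Walk.take_length] at h₁
  rw [Walk.drop_length] at h₂
  exact ⟨p.getVert j, by omega, by omega⟩

lemma Connected.exists_adj_dist_add_one_eq (hconn : G.Connected) (hx : x ≠ u) :
    ∃ y, G.Adj x y ∧ G.dist u y + 1 = G.dist u x := by
  obtain ⟨p, hp⟩ := hconn.exists_walk_length_eq_dist x u
  obtain ⟨y, hxy, q, rfl⟩ := Walk.exists_eq_cons_of_ne hx p
  have h₁ := dist_le q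
  have h₂ := dist_le_dist_add_one_of_adj (u := u) hxy.symm
  rw [Walk.length_cons] at hp
  rw [dist_comm] at h₁ hp
  exact ⟨y, hxy, by omega⟩

open Classical in
noncomputable def bfsParent (G : SimpleGraph V) (u x : V) : V :=
  if h : ∃ y, G.Adj x y ∧ G.dist u y + 1 = G.dist u x then h.choose else u

lemma adj_bfsParent (hconn : G.Connected) (hx : x ≠ u) : G.Adj x (bfsParent G u x) := by
  rw [bfsParent, dif_pos (hconn.exists_adj_dist_add_one_eq hx)]
  exact (hconn.exists_adj_dist_add_one_eq hx).choose_spec.1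

lemma dist_bfsParent_add_one (hconn : G.Connected) (hx : x ≠ u) :
    G.dist u (bfsParent G u x) + 1 = G.dist u x := by
  rw [bfsParent, dif_pos (hconn.exists_adj_dist_add_one_eq hx)]
  exact (hconn.exists_adj_dist_add_one_eq hx).choose_spec.2

@[simp]
lemma bfsParent_self : bfsParent G u u = u := by
  rw [bfsParent, dif_neg]
  rintro ⟨y, -, hy⟩
  simp at hy

lemma dist_iterate_bfsParent (hconn : G.Connected) (x : V) :
    ∀ t, G.dist u ((bfsParent G u)^[t] x) = G.dist u x - t
  | 0 => rfl
  | t + 1 => by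
    have ih := dist_iterate_bfsParent hconn x t
    rw [Function.iterate_succ_apply']
    by_cases h : (bfsParent G u)^[t] x = u
    · simp only [h, bfsParent_self, dist_self] at ih ⊢
      omega
    · have := dist_bfsParent_add_one hconn h
      omega

lemma iterate_bfsParent_of_dist_le (hconn : G.Connected) {t : ℕ} (ht : G.dist u x ≤ t) :
    (bfsParent G u)^[t] x = u := by
  have := dist_iterate_bfsParent (u := u) hconn x t
  exact (hconn.dist_eq_zero_iff.mp (by omega)).symm

lemma dist_eq_of_bfsParent_eq (hconn : G.Connected) (hx : x ≠ u) (hyx : bfsParent G u y = x) :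
    G.dist u y = G.dist u x + 1 := by
  have hy : y ≠ u := by rintro rfl; simp [eq_comm, hx] at hyx
  rw [← dist_bfsParent_add_one hconn hy, hyx]

noncomputable def bfsBranch (G : SimpleGraph V) (u x : V) : V :=
  (bfsParent G u)^[G.dist u x - 1] x

lemma bfsBranch_eq_of_bfsParent_eq (hconn : G.Connected) (hx : x ≠ u)
    (hyx : bfsParent G u y = x) : bfsBranch G u y = bfsBranch G u x := by
  have hpos := hconn.pos_dist_of_ne hx.symm
  rw [bfsBranch, bfsBranch, dist_eq_of_bfsParent_eq hconn hx hyx, Nat.add_sub_cancel,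
    ← Nat.sub_add_cancel hpos, Function.iterate_succ_apply, hyx]
  rfl

lemma bfsBranch_eq_self_of_adj (h : G.Adj u x) : bfsBranch G u x = x := by
  simp [bfsBranch, dist_eq_one_iff_adj.mpr h]

def IsNonTreeEdge (G : SimpleGraph V) (u x y : V) : Prop :=
  G.Adj x y ∧ bfsParent G u x ≠ y ∧ bfsParent G u y ≠ x

lemma isNonTreeEdge_or_bfsBranch_eq (hconn : G.Connected) (hxy : G.Adj x y) (hx : x ≠ u)
    (hy : y ≠ u) : IsNonTreeEdge G u x y ∨ bfsBranch G u y = bfsBranch G u x := by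
  by_cases hyx : bfsParent G u y = x
  · exact .inr (bfsBranch_eq_of_bfsParent_eq hconn hx hyx)
  by_cases hxy' : bfsParent G u x = y
  · exact .inr (bfsBranch_eq_of_bfsParent_eq hconn hy hxy').symm
  exact .inl ⟨hxy, hxy', hyx⟩

lemma Walk.bfsBranch_eq_or_exists_isNonTreeEdge (hconn : G.Connected) (p : G.Walk x y)
    (hp : u ∉ p.support) :
    bfsBranch G u y = bfsBranch G u x ∨ ∃ b c, IsNonTreeEdge G u b c ∧
      bfsBranch G u b = bfsBranch G u x ∧ b ∈ p.support ∧ c ∈ p.support := by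
  induction p with
  | nil => exact .inl rfl
  | @cons x z y hxz q ih =>
    rw [support_cons, List.mem_cons, not_or] at hp
    rcases isNonTreeEdge_or_bfsBranch_eq hconn hxz (Ne.symm hp.1)
      (fun h => hp.2 (h ▸ q.start_mem_support)) with hn | hzx
    · exact .inr ⟨x, z, hn, rfl, q.cons hxz |>.start_mem_support,
        List.mem_cons_of_mem _ q.start_mem_support⟩
    · rw [← hzx]
      rcases ih hp.2 with h | ⟨b, c, hbc, hb, hbq, hcq⟩
      · exact .inl h
      · exact .inr ⟨b, c, hbc, hb, List.mem_cons_of_mem _ hbq, List.mem_cons_of_mem _ hcq⟩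

lemma exists_adj_mem_kCore_ne {k : ℕ} (hk : 1 < k) (hx : x ∈ kCore G k) (p : V) :
    ∃ y ∈ kCore G k, G.Adj x y ∧ y ≠ p := by
  obtain ⟨S, hS, hxS⟩ := hx
  have hcard : k ≤ {y | y ∈ S ∧ G.Adj x y}.ncard := by
    rw [← Nat.card_coe_set_eq]
    exact hS x hxS
  obtain ⟨y, ⟨hyS, hxy⟩, hyp⟩ :=
    Set.exists_ne_of_one_lt_ncard (s := {y | y ∈ S ∧ G.Adj x y}) (by omega) p
  exact ⟨y, Set.mem_sUnion_of_mem hyS hS, hxy, hyp⟩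

lemma exists_two_adj_mem_kCore_ne_of_mem_V23 (hv : v ∈ V23 G) (p : V) :
    ∃ y₁ y₂, (y₁ ∈ kCore G 2 ∧ G.Adj v y₁ ∧ y₁ ≠ p) ∧ (y₂ ∈ kCore G 2 ∧ G.Adj v y₂ ∧ y₂ ≠ p) ∧
      y₁ ≠ y₂ := by
  have hcard : 3 ≤ {y | y ∈ kCore G 2 ∧ G.Adj v y}.ncard := by
    rw [← Nat.card_coe_set_eq]
    exact hv.2
  have := Set.pred_ncard_le_ncard_sdiff_singleton {y | y ∈ kCore G 2 ∧ G.Adj v y} p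
  obtain ⟨⟨y₁, ⟨hy₁, hy₁p⟩, y₂, ⟨hy₂, hy₂p⟩, hne⟩, -⟩ :=
    (Set.one_lt_ncard_iff_nontrivial_and_finite
      (s := {y | y ∈ kCore G 2 ∧ G.Adj v y} \ {p})).mp (by omega)
  exact ⟨y₁, y₂, ⟨hy₁.1, hy₁.2, hy₁p⟩, ⟨hy₂.1, hy₂.2, hy₂p⟩, hne⟩

/-- Each vertex of the 2-core has a 2-core neighbour other than its parent: either a child, to
which the descent continues, or the other end of a non-tree edge. -/
lemma exists_isNonTreeEdge_or_descendant (hconn : G.Connected) (n : ℕ) (hx : x ∈ kCore G 2)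
    (hxu : x ≠ u) :
    (∃ b c, IsNonTreeEdge G u b c ∧ bfsBranch G u b = bfsBranch G u x ∧
      G.dist u b < G.dist u x + n) ∨
    ∃ y, G.dist u y = G.dist u x + n ∧ bfsBranch G u y = bfsBranch G u x ∧ G.dist x y ≤ n := by
  induction n generalizing x with
  | zero => exact .inr ⟨x, rfl, rfl, by simp⟩
  | succ n ih =>
    obtain ⟨y, hy, hxy, hyp⟩ := exists_adj_mem_kCore_ne one_lt_two hx (bfsParent G u x)
    by_cases hyx : bfsParent G u y = x
    swap
    · exact .inl ⟨x, y, ⟨hxy, hyp.symm, hyx⟩, rfl, by omega⟩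
    have hdy := dist_eq_of_bfsParent_eq hconn hxu hyx
    have hby := bfsBranch_eq_of_bfsParent_eq hconn hxu hyx
    have hyu : y ≠ u := by rintro rfl; simp [eq_comm, hxu] at hyx
    rcases ih hy hyu with ⟨b, c, hbc, hb, hdb⟩ | ⟨z, hdz, hbz, hyz⟩
    · exact .inl ⟨b, c, hbc, hb.trans hby, by omega⟩
    · have := dist_le_dist_add_one_of_adj (u := z) hxy.symm
      rw [dist_comm, dist_comm (u := z)] at this
      exact .inr ⟨z, by omega, hbz.trans hby, by omega⟩

lemma induce_connected_of_bfsParent_mem (hconn : G.Connected) {S : Set V} (hu : u ∈ S)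
    (hS : ∀ x ∈ S, bfsParent G u x ∈ S) : (G.induce S).Connected := by
  have key : ∀ n x (hx : x ∈ S), G.dist u x = n → (G.induce S).Reachable ⟨u, hu⟩ ⟨x, hx⟩ := by
    intro n
    induction n with
    | zero =>
      intro x hx h
      obtain rfl := hconn.dist_eq_zero_iff.mp h
      rfl
    | succ n ih =>
      intro x hx h
      have hxu : x ≠ u := by rintro rfl; simp at h
      have hadj : (G.induce S).Adj ⟨x, hx⟩ ⟨_, hS x hx⟩ := adj_bfsParent hconn hxu
      exact (ih _ _ (by have := dist_bfsParent_add_one hconn hxu; omega)).trans hadj.reachable.symm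
  exact (connected_iff_exists_forall_reachable _).mpr ⟨⟨u, hu⟩, fun ⟨x, hx⟩ => key _ x hx rfl⟩

lemma injOn_mk_bfsParent (hconn : G.Connected) :
    Set.InjOn (fun x => s(x, bfsParent G u x)) {x | x ≠ u} := by
  intro x hx y hy h
  rcases Sym2.eq_iff.mp h with ⟨hxy, -⟩ | ⟨hxy, hyx⟩
  · exact hxy
  · have := dist_bfsParent_add_one hconn hx
    have := dist_bfsParent_add_one hconn hy
    rw [← hxy] at this
    rw [hyx] at *
    omega

lemma IsNonTreeEdge.mk_ne_mk_bfsParent (h : IsNonTreeEdge G u x y) (z : V) :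
    s(x, y) ≠ s(z, bfsParent G u z) := by
  rw [Ne, Sym2.eq_iff]
  rintro (⟨rfl, rfl⟩ | ⟨rfl, rfl⟩)
  exacts [h.2.1 rfl, h.2.2 rfl]

lemma two_mul_card_le_natCard_adj [DecidableEq V] {S : Finset V} {E : Finset (Sym2 V)}
    (hE : ∀ e ∈ E, e ∈ G.edgeSet ∧ ∀ x ∈ e, x ∈ S) :
    2 * #E ≤ Nat.card {p : V × V // p.1 ∈ S ∧ p.2 ∈ S ∧ G.Adj p.1 p.2} := by
  set P := (S ×ˢ S).filter fun p => s(p.1, p.2) ∈ E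
  have hfiber : ∀ e ∈ E, #{p ∈ P | s(p.1, p.2) = e} = 2 := by
    intro e he
    induction e using Sym2.ind with
    | h a b =>
      obtain ⟨hab, hS⟩ := hE _ he
      have : {p ∈ P | s(p.1, p.2) = s(a, b)} = {(a, b), (b, a)} := by
        ext ⟨x, y⟩
        simp only [P, mem_filter, mem_product, mem_insert, mem_singleton, Prod.mk.injEq]
        constructor
        · exact fun h => Sym2.eq_iff.mp h.2
        · rintro (⟨rfl, rfl⟩ | ⟨rfl, rfl⟩)
          · exact ⟨⟨⟨hS _ (Sym2.mem_mk_left _ _), hS _ (Sym2.mem_mk_right _ _)⟩, he⟩, rfl⟩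
          · exact ⟨⟨⟨hS _ (Sym2.mem_mk_right _ _), hS _ (Sym2.mem_mk_left _ _)⟩,
              Sym2.eq_swap ▸ he⟩, Sym2.eq_swap⟩
      rw [this, card_pair (by simp [G.ne_of_adj hab])]
  have hP : #P = 2 * #E := by
    rw [card_eq_sum_card_fiberwise (f := fun p : V × V => s(p.1, p.2)) (s := P) (t := E)
      fun p hp => (mem_filter.mp hp).2, sum_congr rfl hfiber, sum_const, smul_eq_mul, mul_comm]
  rw [← hP, ← Set.ncard_coe_finset, ← Nat.card_coe_set_eq]
  have hPS : (P : Set (V × V)) ⊆ {p | p.1 ∈ S ∧ p.2 ∈ S ∧ G.Adj p.1 p.2} := fun p hp => by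
    simp only [P, coe_filter, mem_product] at hp
    exact ⟨hp.1.1, hp.1.2, (hE _ hp.2).1⟩
  refine Set.ncard_le_ncard hPS ((S ×ˢ S).finite_toSet.subset fun p hp => ?_)
  exact mem_product.mpr ⟨hp.1, hp.2.1⟩

/-- The union of the tree paths from the vertices of `X` up to `u`, when `X` lies within
distance `R` of `u`. -/
noncomputable def bfsTreeHull [DecidableEq V] (G : SimpleGraph V) (u : V) (R : ℕ)
    (X : Finset V) : Finset V :=
  (range (R + 1) ×ˢ X).image fun p => (bfsParent G u)^[p.1] p.2

section bfsTreeHull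

variable [DecidableEq V] {R : ℕ} {X : Finset V}

lemma subset_bfsTreeHull : X ⊆ bfsTreeHull G u R X :=
  fun x hx => mem_image.mpr ⟨(0, x), by simp [hx], rfl⟩

lemma card_bfsTreeHull_le : #(bfsTreeHull G u R X) ≤ (R + 1) * #X :=
  card_image_le.trans (by simp)

lemma root_mem_bfsTreeHull (hconn : G.Connected) (hX : ∀ x ∈ X, G.dist u x ≤ R) (hx : x ∈ X) :
    u ∈ bfsTreeHull G u R X :=
  mem_image.mpr ⟨(R, x), by simp [hx], iterate_bfsParent_of_dist_le hconn (hX x hx)⟩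

lemma bfsParent_mem_bfsTreeHull (hconn : G.Connected) (hX : ∀ x ∈ X, G.dist u x ≤ R)
    (hy : y ∈ bfsTreeHull G u R X) : bfsParent G u y ∈ bfsTreeHull G u R X := by
  obtain ⟨⟨t, x⟩, htx, rfl⟩ := mem_image.mp hy
  simp only [mem_product, mem_range] at htx
  rcases Nat.lt_or_ge t R with ht | ht
  · exact mem_image.mpr ⟨(t + 1, x), by simp [htx.2, ht], Function.iterate_succ_apply' _ _ _⟩
  · rw [iterate_bfsParent_of_dist_le hconn ((hX x htx.2).trans ht), bfsParent_self]
    exact root_mem_bfsTreeHull hconn hX htx.2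

end bfsTreeHull

def nearNonTreeEdges (G : SimpleGraph V) (u : V) (R : ℕ) : Set (Sym2 V) :=
  {e | ∃ x y, e = s(x, y) ∧ IsNonTreeEdge G u x y ∧ G.dist u x ≤ R ∧ G.dist u y ≤ R}

/-- Count the tree edges `s(x, bfsParent G u x)` for `x ∈ S \ {u}` and the two non-tree edges. -/
lemma two_mul_card_add_two_le_natCard_adj [DecidableEq V] (hconn : G.Connected) {S : Finset V}
    (huS : u ∈ S) (hS : ∀ x ∈ S, bfsParent G u x ∈ S) {b₁ c₁ b₂ c₂ : V}
    (h₁ : IsNonTreeEdge G u b₁ c₁) (h₂ : IsNonTreeEdge G u b₂ c₂) (hne : s(b₁, c₁) ≠ s(b₂, c₂))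
    (hXS : {b₁, c₁, b₂, c₂} ⊆ S) :
    2 * #S + 2 ≤ Nat.card {e : V × V // e.1 ∈ S ∧ e.2 ∈ S ∧ G.Adj e.1 e.2} := by
  set T := (S.erase u).image fun x => s(x, bfsParent G u x)
  have hT : #T = #S - 1 := by
    rw [card_image_of_injOn ((injOn_mk_bfsParent hconn).mono fun x hx => (mem_erase.mp hx).1),
      card_erase_of_mem huS]
  have hnotT : ∀ {b c}, IsNonTreeEdge G u b c → s(b, c) ∉ T := fun hbc hT => by
    obtain ⟨z, -, hz⟩ := mem_image.mp hT
    exact hbc.mk_ne_mk_bfsParent z hz.symm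
  have hedge : ∀ {x y}, G.Adj x y → x ∈ S → y ∈ S →
      s(x, y) ∈ G.edgeSet ∧ ∀ z ∈ s(x, y), z ∈ S := fun hxy hx hy =>
    ⟨hxy, fun z hz => by rcases Sym2.mem_iff.mp hz with rfl | rfl <;> assumption⟩
  calc 2 * #S + 2 = 2 * #(insert s(b₁, c₁) (insert s(b₂, c₂) T)) := by
        rw [card_insert_of_notMem (by simp [hne, hnotT h₁]), card_insert_of_notMem (hnotT h₂), hT]
        have := card_pos.mpr ⟨u, huS⟩
        omega
    _ ≤ _ := by
        refine two_mul_card_le_natCard_adj fun e he => ?_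
        rcases mem_insert.mp he with rfl | he
        · exact hedge h₁.1 (hXS (by simp)) (hXS (by simp))
        rcases mem_insert.mp he with rfl | he
        · exact hedge h₂.1 (hXS (by simp)) (hXS (by simp))
        obtain ⟨x, hx, rfl⟩ := mem_image.mp he
        exact hedge (adj_bfsParent hconn (mem_erase.mp hx).1) (mem_erase.mp hx).2
          (hS x (mem_erase.mp hx).2)

theorem Connected.exists_dense_of_nearNonTreeEdges_nontrivial (hconn : G.Connected) {R : ℕ}
    (h : (nearNonTreeEdges G u R).Nontrivial) :
    ∃ S : Finset V, #S ≤ 4 * (R + 1) ∧ (G.induce (S : Set V)).Connected ∧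
      2 * #S + 2 ≤ Nat.card {e : V × V // e.1 ∈ S ∧ e.2 ∈ S ∧ G.Adj e.1 e.2} := by
  classical
  obtain ⟨_, ⟨b₁, c₁, rfl, h₁, hb₁, hc₁⟩, _, ⟨b₂, c₂, rfl, h₂, hb₂, hc₂⟩, hne⟩ := h
  set X : Finset V := {b₁, c₁, b₂, c₂}
  have hX : ∀ x ∈ X, G.dist u x ≤ R := by
    simp only [X, mem_insert, mem_singleton]
    rintro x (rfl | rfl | rfl | rfl) <;> assumption
  have huS : u ∈ bfsTreeHull G u R X := root_mem_bfsTreeHull hconn hX (x := b₁) (by simp [X])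
  have hS x (hx : x ∈ bfsTreeHull G u R X) := bfsParent_mem_bfsTreeHull hconn hX hx
  have hcard : #(bfsTreeHull G u R X) ≤ 4 * (R + 1) := calc
    _ ≤ (R + 1) * #X := card_bfsTreeHull_le
    _ ≤ (R + 1) * 4 := Nat.mul_le_mul_left _ card_le_four
    _ = 4 * (R + 1) := mul_comm _ _
  exact ⟨_, hcard, induce_connected_of_bfsParent_mem hconn huS hS,
    two_mul_card_add_two_le_natCard_adj hconn huS hS h₁ h₂ hne subset_bfsTreeHull⟩

lemma Connected.dist_le_two_mul_of_forall_dist_le (hconn : G.Connected) {i : ℕ}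
    (hN : ∀ w, G.dist u w = i → G.dist v w ≤ i) : G.dist u v ≤ 2 * i := by
  by_contra! h
  obtain ⟨m, hum, hmv⟩ := hconn.exists_dist_eq_of_le_dist (u := u) (v := v) (j := i) (by omega)
  have := hN m hum
  rw [dist_comm] at this
  omega

lemma Connected.exists_near_nonTreeEdge_of_adj (hconn : G.Connected) (huv : u ≠ v) {i : ℕ}
    (hi : 1 ≤ i) (hN : ∀ w, G.dist u w = i → G.dist v w ≤ i) {a : V} (ha : a ∈ kCore G 2)
    (hua : G.Adj u a) (hav : a ≠ bfsBranch G u v) :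
    ∃ b c, s(b, c) ∈ nearNonTreeEdges G u (3 * i + 1) ∧ bfsBranch G u b = a := by
  have hd := hconn.dist_le_two_mul_of_forall_dist_le hN
  have hba := bfsBranch_eq_self_of_adj hua
  have hda : G.dist u a = 1 := dist_eq_one_iff_adj.mpr hua
  rcases exists_isNonTreeEdge_or_descendant hconn (i - 1) ha (G.ne_of_adj hua).symm with
    ⟨b, c, hbc, hb, hdb⟩ | ⟨w, hdw, hbw, -⟩
  · have := dist_le_dist_add_one_of_adj (u := u) hbc.1
    exact ⟨b, c, ⟨b, c, rfl, hbc, by omega, by omega⟩, hb.trans hba⟩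
  rw [hba] at hbw
  obtain ⟨p, hp⟩ := hconn.exists_walk_length_eq_dist w v
  have hlen : p.length ≤ i := by
    rw [hp, dist_comm]
    exact hN w (by omega)
  -- a path of length `≤ i` from the sphere of radius `i` to `v ≠ u` cannot pass through `u`
  have hup : u ∉ p.support := fun hu => by
    have := p.dist_add_dist_le_length hu
    have := hconn.pos_dist_of_ne huv
    have : G.dist w u = G.dist u w := dist_comm
    omega
  have hnear : ∀ x ∈ p.support, G.dist u x ≤ 3 * i := fun x hx => by
    have := p.dist_add_dist_le_length hx
    have := hconn.dist_triangle (u := u) (v := v) (w := x)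
    have : G.dist v x = G.dist x v := dist_comm
    omega
  rcases p.bfsBranch_eq_or_exists_isNonTreeEdge hconn hup with h | ⟨b, c, hbc, hb, hbp, hcp⟩
  · exact absurd (hbw.symm.trans h.symm) hav
  · exact ⟨b, c, ⟨b, c, rfl, hbc, by linarith [hnear b hbp], by linarith [hnear c hcp]⟩,
      hb.trans hbw⟩

lemma Connected.exists_near_nonTreeEdge_of_bfsParent_eq (hconn : G.Connected) (huv : u ≠ v) {i : ℕ}
    (hi : 1 ≤ i) (hd : G.dist u v ≤ 2 * i) (hN : ∀ w, G.dist v w = i → G.dist u w ≤ i)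
    (hy : y ∈ kCore G 2) (hyv : bfsParent G u y = v) :
    ∃ b c, s(b, c) ∈ nearNonTreeEdges G u (3 * i + 1) ∧ bfsBranch G u b = bfsBranch G u v := by
  have hdy := dist_eq_of_bfsParent_eq hconn huv.symm hyv
  have hyu : y ≠ u := by rintro rfl; simp [huv] at hyv
  have hvy : G.Adj v y := hyv ▸ (adj_bfsParent hconn hyu).symm
  rcases exists_isNonTreeEdge_or_descendant hconn (i - 1) hy hyu with
    ⟨b, c, hbc, hb, hdb⟩ | ⟨z, hdz, -, hyz⟩
  · have := dist_le_dist_add_one_of_adj (u := u) hbc.1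
    exact ⟨b, c, ⟨b, c, rfl, hbc, by omega, by omega⟩,
      hb.trans (bfsBranch_eq_of_bfsParent_eq hconn huv.symm hyv)⟩
  -- otherwise the descent reaches a vertex `z` with `dist v z = i < dist u z`
  have hvz : G.dist v z ≤ i := by
    have := hvy.reachable.dist_triangle_left z
    rw [dist_eq_one_iff_adj.mpr hvy] at this
    omega
  have := hconn.dist_triangle (u := u) (v := v) (w := z)
  have := hconn.pos_dist_of_ne huv
  have := hN z (by omega)
  omega

lemma Connected.exists_near_nonTreeEdge_of_mem_V23 (hconn : G.Connected) (huv : u ≠ v) {i : ℕ}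
    (hi : 1 ≤ i) (hd : G.dist u v ≤ 2 * i) (hN : ∀ w, G.dist v w = i → G.dist u w ≤ i)
    (hv : v ∈ V23 G) (hsub : (nearNonTreeEdges G u (3 * i + 1)).Subsingleton) :
    ∃ b c, s(b, c) ∈ nearNonTreeEdges G u (3 * i + 1) ∧ bfsBranch G u b = bfsBranch G u v := by
  obtain ⟨y₁, y₂, ⟨hy₁, hvy₁, hy₁v⟩, ⟨hy₂, hvy₂, hy₂v⟩, hne⟩ :=
    exists_two_adj_mem_kCore_ne_of_mem_V23 hv (bfsParent G u v)
  by_cases h₁ : bfsParent G u y₁ = v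
  · exact hconn.exists_near_nonTreeEdge_of_bfsParent_eq huv hi hd hN hy₁ h₁
  by_cases h₂ : bfsParent G u y₂ = v
  · exact hconn.exists_near_nonTreeEdge_of_bfsParent_eq huv hi hd hN hy₂ h₂
  have hnear : ∀ y, G.Adj v y → y ≠ bfsParent G u v → bfsParent G u y ≠ v →
      s(v, y) ∈ nearNonTreeEdges G u (3 * i + 1) := fun y hvy hyv hpy => by
    have := dist_le_dist_add_one_of_adj (u := u) hvy
    exact ⟨v, y, rfl, ⟨hvy, hyv.symm, hpy⟩, by omega, by omega⟩
  exact absurd (Sym2.congr_right.mp (hsub (hnear y₁ hvy₁ hy₁v h₁) (hnear y₂ hvy₂ hy₂v h₂))) hne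

end SimpleGraph

lemma Sym2.eq_or_eq_or_eq_of_mem {α : Type*} {a b x y z : α} (hx : x ∈ s(a, b))
    (hy : y ∈ s(a, b)) (hz : z ∈ s(a, b)) : x = y ∨ x = z ∨ y = z := by
  rw [Sym2.mem_iff] at hx hy hz
  grind

theorem stmt19_general {V : Type*} (k : ℕ) (G : SimpleGraph V)
    (hconn : G.Connected)
    (hnos : ¬ ∃ S : Finset V, S.card ≤ 20 * k ∧ (G.induce (S : Set V)).Connected ∧
      2 * S.card + 2 ≤ Nat.card {e : V × V // e.1 ∈ S ∧ e.2 ∈ S ∧ G.Adj e.1 e.2})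
    (u v : V) (hu : u ∈ V23 G) (hv : v ∈ V23 G) (huv : u ≠ v)
    (i : ℕ) (hi1 : 1 ≤ i) (hik : i ≤ k) :
    ∃ w : V, (G.dist u w = i ∧ i < G.dist v w) ∨ (G.dist v w = i ∧ i < G.dist u w) := by
  by_contra! hN
  have hd := hconn.dist_le_two_mul_of_forall_dist_le fun w => (hN w).1
  have hsub : (G.nearNonTreeEdges u (3 * i + 1)).Subsingleton := by
    by_contra h
    obtain ⟨S, hS, hSconn, hSdense⟩ :=
      hconn.exists_dense_of_nearNonTreeEdges_nontrivial (Set.not_subsingleton_iff.mp h)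
    exact hnos ⟨S, by omega, hSconn, hSdense⟩
  obtain ⟨a₁, a₂, ⟨ha₁, hua₁, ha₁v⟩, ⟨ha₂, hua₂, ha₂v⟩, ha₁₂⟩ :=
    SimpleGraph.exists_two_adj_mem_kCore_ne_of_mem_V23 hu (G.bfsBranch u v)
  obtain ⟨b₁, c₁, he₁, hb₁⟩ :=
    hconn.exists_near_nonTreeEdge_of_adj huv hi1 (fun w => (hN w).1) ha₁ hua₁ ha₁v
  obtain ⟨b₂, c₂, he₂, hb₂⟩ :=
    hconn.exists_near_nonTreeEdge_of_adj huv hi1 (fun w => (hN w).1) ha₂ hua₂ ha₂v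
  obtain ⟨b₃, c₃, he₃, hb₃⟩ :=
    hconn.exists_near_nonTreeEdge_of_mem_V23 huv hi1 hd (fun w => (hN w).2) hv hsub
  -- the three edges coincide, but their ends `b₁, b₂, b₃` lie in three different branches
  rcases Sym2.eq_or_eq_or_eq_of_mem (Sym2.mem_mk_left b₁ c₁)
    (hsub he₁ he₂ ▸ Sym2.mem_mk_left b₂ c₂) (hsub he₁ he₃ ▸ Sym2.mem_mk_left b₃ c₃) with
    h | h | h <;> subst h
  · exact ha₁₂ (hb₁.symm.trans hb₂)
  · exact ha₁v (hb₁.symm.trans hb₃)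
  · exact ha₂v (hb₂.symm.trans hb₃)

/-- Lemma 6.5.
Let `k ≥ 1` and let `G` be a connected finite graph with no connected subgraph on at most
`20k` vertices having more edges than vertices (i.e. containing at least two cycles; edge
counts taken over ordered adjacent pairs). Then for distinct `u, v ∈ V_{2,3}(G)` and every
`1 ≤ i ≤ k` there is a vertex `w` with `dist(u,w) = i < dist(v,w)` or
`dist(v,w) = i < dist(u,w)`. -/
theorem stmt19 {V : Type*} [Fintype V] (k : ℕ) (hk : 1 ≤ k) (G : SimpleGraph V)
    (hconn : G.Connected)
    (hnos : ¬ ∃ S : Finset V, S.card ≤ 20 * k ∧ (G.induce (S : Set V)).Connected ∧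
      2 * S.card + 2 ≤ Nat.card {e : V × V // e.1 ∈ S ∧ e.2 ∈ S ∧ G.Adj e.1 e.2})
    (u v : V) (hu : u ∈ V23 G) (hv : v ∈ V23 G) (huv : u ≠ v)
    (i : ℕ) (hi1 : 1 ≤ i) (hik : i ≤ k) :
    ∃ w : V, (G.dist u w = i ∧ i < G.dist v w) ∨ (G.dist v w = i ∧ i < G.dist u w) :=
  stmt19_general k G hconn hnos u v hu hv huv i hi1 hik
end
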